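/- arXiv:1209.0966 — 7 statements merged into one kernel-verified Lean document; each statement's English description precedes it below -/
import Mathlib

section
/- The natural HNN extension of the cyclically presented group G_n(w) is isomorphic to the two-generator group with presentation ⟨a, c | W(a,c), [a, c^n]⟩, where W(a,c) = w(ac⁻¹, cac⁻², c²ac⁻³, …, c^{n-1}ac⁻ⁿ). -/
/-- The shift endomorphism `θ` of the free group on `ZMod n`, sending `x_i` to `x_{i+1}`. -/
def shiftEnd (n : ℕ) [NeZero n] : Monoid.End (FreeGroup (ZMod n)) :=
  FreeGroup.lift fun i => FreeGroup.of (i + 1)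

/-- The relators `w, θ(w), …, θ^{n-1}(w)` of the cyclic presentation `G_n(w)`. -/
def cycRels (n : ℕ) [NeZero n] (w : FreeGroup (ZMod n)) : Set (FreeGroup (ZMod n)) :=
  Set.range fun j : ZMod n => (shiftEnd n ^ j.val) w

/-- The cyclically presented group `G_n(w)`. -/
abbrev Gn (n : ℕ) [NeZero n] (w : FreeGroup (ZMod n)) := PresentedGroup (cycRels n w)

/-- Generators of the two-generator presentation: `a` and `c`. -/
def agen : FreeGroup Bool := FreeGroup.of true
def cgen : FreeGroup Bool := FreeGroup.of false

/-- `W(a,c) = w(ac⁻¹, cac⁻², c²ac⁻³, …, c^{n-1}ac⁻ⁿ)`. -/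
def Wword (n : ℕ) [NeZero n] (w : FreeGroup (ZMod n)) : FreeGroup Bool :=
  FreeGroup.lift (fun i : ZMod n => cgen ^ i.val * agen * (cgen ^ (i.val + 1))⁻¹) w

/-- The relators of the presentation `⟨a, c ∣ W(a,c), [a,cⁿ]⟩`. -/
def twoGenRels (n : ℕ) [NeZero n] (w : FreeGroup (ZMod n)) : Set (FreeGroup Bool) :=
  {Wword n w, agen⁻¹ * (cgen ^ n)⁻¹ * agen * cgen ^ n}

/-!
In `Ĝ = G_n(w) ⋊ ℤ` with stable letter `t`, put `a = x₀ t` and `c = t`. Since conjugation by `t`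
is the shift, `xᵢ = tⁱ x₀ t⁻ⁱ = cⁱ a c⁻⁽ⁱ⁺¹⁾`, so `Ĝ` is generated by `a` and `c`; the relator `w`
becomes `W(a, c)`, and `tⁿ` commutes with `x₀` because `φⁿ` fixes the generators. Conversely
`xᵢ ↦ cⁱ a c⁻⁽ⁱ⁺¹⁾`, `t ↦ c` is well defined on `Ĝ`: conjugation by `c` shifts these words, the
wrap-around from `x_{n-1}` to `x₀` being exactly the relation `[a, cⁿ] = 1`, so every `θʲ(w)` is
killed as a conjugate of `W`. The two maps are mutually inverse on generators.
-/
section Conjugation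

variable {G H : Type*} [Group G] [Group H]

theorem inv_mul_inv_mul_mul_eq_one_iff_commute {x y : G} :
    x⁻¹ * y⁻¹ * x * y = 1 ↔ Commute x y := by
  rw [mul_assoc, mul_assoc, inv_mul_eq_one, eq_inv_mul_iff_mul_eq, eq_comm, commute_iff_eq]

theorem conj_pow_mod_eq_conj_pow {b c : G} {n : ℕ} (h : Commute b (c ^ n)) (m : ℕ) :
    c ^ (m % n) * b * (c ^ (m % n))⁻¹ = c ^ m * b * (c ^ m)⁻¹ := by
  conv_rhs => rw [← Nat.mod_add_div m n, pow_add, pow_mul, mul_assoc _ _ b,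
    ← (h.pow_right (m / n)).eq]
  group

/-- At `i = n - 1` the exponent wraps around to `0`; this is where `Commute b (c ^ n)` is used. -/
theorem conj_pow_val_add_one {b c : G} {n : ℕ} [NeZero n] (h : Commute b (c ^ n)) (i : ZMod n) :
    c ^ (i + 1).val * b * (c ^ (i + 1).val)⁻¹ = c * (c ^ i.val * b * (c ^ i.val)⁻¹) * c⁻¹ := by
  rw [ZMod.val_add, ZMod.val_one_eq_one_mod, Nat.add_mod_mod, conj_pow_mod_eq_conj_pow h]
  group

theorem MonoidHom.map_pow_apply_eq_conj_pow (f : G →* H) {σ : Monoid.End G} {c : H}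
    (h : ∀ g, f (σ g) = c * f g * c⁻¹) (k : ℕ) (g : G) :
    f ((σ ^ k) g) = c ^ k * f g * (c ^ k)⁻¹ := by
  induction k generalizing g with
  | zero => simp
  | succ k ih => rw [pow_succ, Monoid.End.coe_mul, Function.comp_apply, ih, h]; group

theorem MonoidHom.map_zpow_apply_eq_conj_zpow (f : G →* H) {φ : MulAut G} {c : H}
    (h : ∀ g, f (φ g) = c * f g * c⁻¹) (m : ℤ) (g : G) :
    f ((φ ^ m) g) = c ^ m * f g * (c ^ m)⁻¹ := by
  have h_inv (g : G) : f (φ⁻¹ g) = c⁻¹ * f g * c := by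
    conv_rhs => rw [← MulAut.apply_inv_self G φ g, h]
    group
  induction m using Int.induction_on generalizing g with
  | zero => simp
  | succ k ih => rw [zpow_add_one, MulAut.mul_apply, ih, h]; group
  | pred k ih => rw [zpow_sub_one, MulAut.mul_apply, ih, h_inv]; group

theorem MulAut.pow_apply_eq_of_apply_eq_add_one {n : ℕ} {φ : MulAut G} {x : ZMod n → G}
    (hx : ∀ i, φ (x i) = x (i + 1)) (k : ℕ) (i : ZMod n) : (φ ^ k) (x i) = x (i + k) := by
  induction k with
  | zero => simp
  | succ k ih => rw [pow_succ', MulAut.mul_apply, ih, hx, Nat.cast_succ, add_assoc]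

end Conjugation

section CyclicWord

variable {n : ℕ} {H K : Type*} [Group H] [Group K]

/-- The substitution `xᵢ ↦ cⁱ a c⁻⁽ⁱ⁺¹⁾`, so that `Wword n w = cyclicWordHom agen cgen w`. -/
def cyclicWordHom (a c : H) : FreeGroup (ZMod n) →* H :=
  FreeGroup.lift fun i => c ^ i.val * a * (c ^ (i.val + 1))⁻¹

theorem cyclicWordHom_of (a c : H) (i : ZMod n) :
    cyclicWordHom a c (FreeGroup.of i) = c ^ i.val * (a * c⁻¹) * (c ^ i.val)⁻¹ := by
  rw [cyclicWordHom, FreeGroup.lift_apply_of]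
  group

theorem MonoidHom.map_cyclicWordHom (f : H →* K) (a c : H) (u : FreeGroup (ZMod n)) :
    f (cyclicWordHom a c u) = cyclicWordHom (f a) (f c) u := by
  rw [← MonoidHom.comp_apply]
  congr 1
  ext i
  simp [cyclicWordHom_of]

theorem cyclicWordHom_of_add_one [NeZero n] {a c : H} (h : Commute a (c ^ n)) (i : ZMod n) :
    cyclicWordHom a c (FreeGroup.of (i + 1)) = c * cyclicWordHom a c (FreeGroup.of i) * c⁻¹ := by
  simp only [cyclicWordHom_of]
  exact conj_pow_val_add_one (h.mul_left ((Commute.refl c).pow_right n).inv_left) i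

theorem cyclicWordHom_shiftEnd [NeZero n] {a c : H} (h : Commute a (c ^ n))
    (u : FreeGroup (ZMod n)) :
    cyclicWordHom a c (shiftEnd n u) = c * cyclicWordHom a c u * c⁻¹ := by
  have : (cyclicWordHom a c).comp (shiftEnd n) =
      (MulAut.conj c).toMonoidHom.comp (cyclicWordHom a c) := by
    ext i
    simp [shiftEnd, cyclicWordHom_of_add_one h]
  exact DFunLike.congr_fun this u

theorem cyclicWordHom_eq_one_of_mem_cycRels [NeZero n] {a c : H} (h : Commute a (c ^ n))
    {w : FreeGroup (ZMod n)} (hw : cyclicWordHom a c w = 1) :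
    ∀ r ∈ cycRels n w, cyclicWordHom a c r = 1 := by
  rintro r ⟨j, rfl⟩
  rw [MonoidHom.map_pow_apply_eq_conj_pow _ (cyclicWordHom_shiftEnd h), hw]
  group

end CyclicWord

namespace SemidirectProduct

variable {N H : Type*} [Group N] [Group H] (φ : MulAut N)

local notation "N⋊ℤ" => N ⋊[zpowersHom (MulAut N) φ] Multiplicative ℤ

def stableLetter : N⋊ℤ := inr (Multiplicative.ofAdd 1)

theorem stableLetter_pow_mul_inl_mul_inv (k : ℕ) (g : N) :
    stableLetter φ ^ k * inl g * (stableLetter φ ^ k)⁻¹ = inl ((φ ^ k) g) := by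
  rw [stableLetter, ← map_pow, ← map_inv, ← inl_aut, ← ofAdd_nsmul]
  simp

def liftZPowers (f : N →* H) (c : H) (h : ∀ g, f (φ g) = c * f g * c⁻¹) : N⋊ℤ →* H :=
  lift f (zpowersHom H c) fun z => by
    ext g
    simp only [MonoidHom.comp_apply, MulEquiv.coe_toMonoidHom, zpowersHom_apply,
      MulAut.conj_apply, f.map_zpow_apply_eq_conj_zpow h]

theorem liftZPowers_inl (f : N →* H) (c : H) (h : ∀ g, f (φ g) = c * f g * c⁻¹) (g : N) :
    liftZPowers φ f c h (inl g) = f g :=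
  lift_inl _ _ _ g

theorem liftZPowers_stableLetter (f : N →* H) (c : H) (h : ∀ g, f (φ g) = c * f g * c⁻¹) :
    liftZPowers φ f c h (stableLetter φ) = c := by
  simp [liftZPowers, stableLetter]

variable {n : ℕ} {x : ZMod n → N}

theorem cyclicWordHom_inl_mul_stableLetter_of [NeZero n] (hx : ∀ i, φ (x i) = x (i + 1))
    (i : ZMod n) :
    cyclicWordHom (inl (x 0) * stableLetter φ) (stableLetter φ) (FreeGroup.of i) = inl (x i) := by
  rw [cyclicWordHom_of, mul_inv_cancel_right, stableLetter_pow_mul_inl_mul_inv,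
    MulAut.pow_apply_eq_of_apply_eq_add_one hx, zero_add, ZMod.natCast_zmod_val]

theorem cyclicWordHom_inl_mul_stableLetter [NeZero n] (hx : ∀ i, φ (x i) = x (i + 1))
    (u : FreeGroup (ZMod n)) :
    cyclicWordHom (inl (x 0) * stableLetter φ) (stableLetter φ) u = inl (FreeGroup.lift x u) := by
  have : cyclicWordHom (inl (x 0) * stableLetter φ) (stableLetter φ) =
      inl.comp (FreeGroup.lift x) :=
    FreeGroup.ext_hom _ _ fun i => by
      rw [cyclicWordHom_inl_mul_stableLetter_of φ hx, MonoidHom.comp_apply, FreeGroup.lift_apply_of]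
  exact DFunLike.congr_fun this u

theorem commute_inl_mul_stableLetter_pow (hx : ∀ i, φ (x i) = x (i + 1)) :
    Commute (inl (x 0) * stableLetter φ) (stableLetter φ ^ n) := by
  refine Commute.mul_left ?_ ((Commute.refl _).pow_right n)
  have h := stableLetter_pow_mul_inl_mul_inv φ n (x 0)
  rw [MulAut.pow_apply_eq_of_apply_eq_add_one hx, ZMod.natCast_self, add_zero] at h
  exact (mul_inv_eq_iff_eq_mul.mp h).symm

end SemidirectProduct

namespace CyclicallyPresented

open SemidirectProduct

variable (n : ℕ) [NeZero n] (w : FreeGroup (ZMod n))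

def twoGenA : PresentedGroup (twoGenRels n w) := PresentedGroup.of true

def twoGenC : PresentedGroup (twoGenRels n w) := PresentedGroup.of false

theorem commute_twoGenA_twoGenC_pow : Commute (twoGenA n w) (twoGenC n w ^ n) := by
  have h := PresentedGroup.one_of_mem (rels := twoGenRels n w) (Set.mem_insert_of_mem _ rfl)
  simp only [map_mul, map_inv, map_pow] at h
  exact inv_mul_inv_mul_mul_eq_one_iff_commute.mp h

theorem cyclicWordHom_twoGenA_twoGenC : cyclicWordHom (twoGenA n w) (twoGenC n w) w = 1 := by
  calc cyclicWordHom (twoGenA n w) (twoGenC n w) w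
      = PresentedGroup.mk _ (cyclicWordHom agen cgen w) :=
        ((PresentedGroup.mk _).map_cyclicWordHom agen cgen w).symm
    _ = 1 := PresentedGroup.one_of_mem (Set.mem_insert _ _)

def toTwoGen : Gn n w →* PresentedGroup (twoGenRels n w) :=
  PresentedGroup.toGroup (cyclicWordHom_eq_one_of_mem_cycRels (commute_twoGenA_twoGenC_pow n w)
    (cyclicWordHom_twoGenA_twoGenC n w))

theorem toTwoGen_of (i : ZMod n) :
    toTwoGen n w (PresentedGroup.of i) =
      cyclicWordHom (twoGenA n w) (twoGenC n w) (FreeGroup.of i) :=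
  (PresentedGroup.toGroup.of _).trans FreeGroup.lift_apply_of.symm

variable {n w} {φ : MulAut (Gn n w)}

theorem toTwoGen_apply_eq_conj
    (hφ : ∀ i : ZMod n, φ (PresentedGroup.of i) = PresentedGroup.of (i + 1)) (g : Gn n w) :
    toTwoGen n w (φ g) = twoGenC n w * toTwoGen n w g * (twoGenC n w)⁻¹ := by
  have : (toTwoGen n w).comp φ.toMonoidHom =
      (MulAut.conj (twoGenC n w)).toMonoidHom.comp (toTwoGen n w) :=
    PresentedGroup.ext fun i => by
      simp [hφ, toTwoGen_of, cyclicWordHom_of_add_one (commute_twoGenA_twoGenC_pow n w)]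
  exact DFunLike.congr_fun this g

variable (φ) in
def twoGenImage (b : Bool) : Gn n w ⋊[zpowersHom (MulAut (Gn n w)) φ] Multiplicative ℤ :=
  cond b (inl (PresentedGroup.of 0) * stableLetter φ) (stableLetter φ)

theorem lift_twoGenImage_agen :
    FreeGroup.lift (twoGenImage φ) agen = inl (PresentedGroup.of 0) * stableLetter φ :=
  FreeGroup.lift_apply_of

theorem lift_twoGenImage_cgen : FreeGroup.lift (twoGenImage φ) cgen = stableLetter φ :=
  FreeGroup.lift_apply_of

theorem lift_twoGenImage_eq_one
    (hφ : ∀ i : ZMod n, φ (PresentedGroup.of i) = PresentedGroup.of (i + 1)) :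
    ∀ r ∈ twoGenRels n w, FreeGroup.lift (twoGenImage φ) r = 1 := by
  rintro r (rfl | rfl)
  · rw [Wword, ← cyclicWordHom, MonoidHom.map_cyclicWordHom, lift_twoGenImage_agen,
      lift_twoGenImage_cgen, cyclicWordHom_inl_mul_stableLetter φ hφ,
      ← FreeGroup.lift_unique (f := PresentedGroup.of) (PresentedGroup.mk _) fun _ => rfl,
      PresentedGroup.one_of_mem (rels := cycRels n w) ⟨0, by simp⟩, map_one]
  · simp only [map_mul, map_inv, map_pow, lift_twoGenImage_agen, lift_twoGenImage_cgen]
    exact inv_mul_inv_mul_mul_eq_one_iff_commute.mpr (commute_inl_mul_stableLetter_pow φ hφ)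

def ofTwoGen (hφ : ∀ i : ZMod n, φ (PresentedGroup.of i) = PresentedGroup.of (i + 1)) :
    PresentedGroup (twoGenRels n w) →* Gn n w ⋊[zpowersHom (MulAut (Gn n w)) φ] Multiplicative ℤ :=
  PresentedGroup.toGroup (lift_twoGenImage_eq_one hφ)

theorem ofTwoGen_twoGenA (hφ : ∀ i : ZMod n, φ (PresentedGroup.of i) = PresentedGroup.of (i + 1)) :
    ofTwoGen hφ (twoGenA n w) = inl (PresentedGroup.of 0) * stableLetter φ :=
  PresentedGroup.toGroup.of _

theorem ofTwoGen_twoGenC (hφ : ∀ i : ZMod n, φ (PresentedGroup.of i) = PresentedGroup.of (i + 1)) :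
    ofTwoGen hφ (twoGenC n w) = stableLetter φ :=
  PresentedGroup.toGroup.of _

end CyclicallyPresented

open SemidirectProduct CyclicallyPresented

/-- The natural HNN extension `Ĝ_n(w) = G_n(w) ⋊_φ ℤ` of the cyclically presented group
`G_n(w)` (where `φ` is the shift automorphism, induced by `θ`) is isomorphic to the
two-generator group `⟨a, c ∣ W(a,c), [a,cⁿ]⟩` with
`W(a,c) = w(ac⁻¹, cac⁻², c²ac⁻³, …, c^{n-1}ac⁻ⁿ)`. -/
theorem natural_HNN_extension_two_generator_presentation
    (n : ℕ) [NeZero n] (w : FreeGroup (ZMod n))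
    (φ : MulAut (Gn n w))
    (hφ : ∀ i : ZMod n, φ (PresentedGroup.of i) = PresentedGroup.of (i + 1)) :
    Nonempty ((Gn n w ⋊[zpowersHom (MulAut (Gn n w)) φ] Multiplicative ℤ) ≃*
      PresentedGroup (twoGenRels n w)) := by
  let Φ := liftZPowers φ (toTwoGen n w) (twoGenC n w) (toTwoGen_apply_eq_conj hφ)
  let Ψ := ofTwoGen hφ
  refine ⟨MonoidHom.toMulEquiv Φ Ψ ?_ ?_⟩
  · refine SemidirectProduct.hom_ext (PresentedGroup.ext fun i => ?_) (MonoidHom.ext_mint ?_)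
    · show Ψ (Φ (inl (PresentedGroup.of i))) = inl (PresentedGroup.of i)
      rw [liftZPowers_inl, toTwoGen_of, Ψ.map_cyclicWordHom, ofTwoGen_twoGenA hφ,
        ofTwoGen_twoGenC hφ, cyclicWordHom_inl_mul_stableLetter_of φ hφ]
    · show Ψ (Φ (stableLetter φ)) = stableLetter φ
      rw [liftZPowers_stableLetter, ofTwoGen_twoGenC hφ]
  · refine PresentedGroup.ext fun b => ?_
    cases b
    · show Φ (Ψ (twoGenC n w)) = twoGenC n w
      rw [ofTwoGen_twoGenC hφ, liftZPowers_stableLetter]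
    · show Φ (Ψ (twoGenA n w)) = twoGenA n w
      rw [ofTwoGen_twoGenA hφ, map_mul, liftZPowers_inl, liftZPowers_stableLetter, toTwoGen_of,
        cyclicWordHom_of, ZMod.val_zero]
      group
end

section
/- Let G be a group, φ an automorphism of G, and G ⋊_φ ℤ the corresponding semidirect product with stable letter t. Then two elements u·t^p and v·t^q of G ⋊_φ ℤ are conjugate if and only if p = q and there exists m ∈ ℤ such that u is φ^p-twisted conjugate to φ^m(v) in G. -/
/-- In the semidirect product `G ⋊_φ ℤ` (with stable letter `t`, where `t⁻¹gt = φ(g)`),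
the elements `u·tᵖ` and `v·t^q` are conjugate if and only if `p = q` and there exists
`m ∈ ℤ` such that `u` is `φᵖ`-twisted conjugate to `φᵐ(v)` in `G`, i.e. there is `g ∈ G`
with `g⁻¹ · u · φᵖ(g) = φᵐ(v)`. -/
theorem conjugacy_in_semidirect_product_iff_twisted_conjugacy
    (G : Type*) [Group G] (φ : MulAut G) (u v : G) (p q : ℤ) :
    IsConj ((⟨u, Multiplicative.ofAdd p⟩ : G ⋊[zpowersHom (MulAut G) φ] Multiplicative ℤ))
        (⟨v, Multiplicative.ofAdd q⟩ : G ⋊[zpowersHom (MulAut G) φ] Multiplicative ℤ) ↔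
      p = q ∧ ∃ m : ℤ, ∃ g : G, g⁻¹ * u * (φ ^ p) g = (φ ^ m) v := by
  constructor
  · rintro ⟨c, hc⟩
    rw [SemiconjBy, SemidirectProduct.ext_iff] at hc
    obtain ⟨h1, h2⟩ := hc
    simp only [SemidirectProduct.mul_left, SemidirectProduct.mul_right,
      zpowersHom_apply, toAdd_ofAdd] at h1 h2
    set a : G := (c : G ⋊[zpowersHom (MulAut G) φ] Multiplicative ℤ).left with ha
    set k : ℤ := Multiplicative.toAdd (c : G ⋊[zpowersHom (MulAut G) φ] Multiplicative ℤ).right with hk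
    have hpq : p = q := by
      have h3 : Multiplicative.ofAdd p * (c : G ⋊[zpowersHom (MulAut G) φ] Multiplicative ℤ).right
          = Multiplicative.ofAdd q * (c : G ⋊[zpowersHom (MulAut G) φ] Multiplicative ℤ).right := by
        rw [mul_comm]; exact h2
      exact Multiplicative.ofAdd.injective (mul_right_cancel h3)
    refine ⟨hpq, -k, (φ ^ (-k)) a⁻¹, ?_⟩
    -- h1 : a * (φ ^ k) u = v * (φ ^ q) a
    have h1' : a * (φ ^ k) u * ((φ ^ p) a)⁻¹ = v := by
      rw [hpq, h1]; group
    have : (φ ^ (-k)) (a * (φ ^ k) u * ((φ ^ p) a)⁻¹) = (φ ^ (-k)) v := by rw [h1']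
    calc ((φ ^ (-k)) a⁻¹)⁻¹ * u * (φ ^ p) ((φ ^ (-k)) a⁻¹)
        = (φ ^ (-k)) (a * (φ ^ k) u * ((φ ^ p) a)⁻¹) := by
          simp only [map_mul, map_inv, inv_inv, ← MulAut.mul_apply, ← zpow_add]
          rw [neg_add_cancel]
          ring_nf
          simp [MulAut.one_apply, add_comm]
      _ = (φ ^ (-k)) v := this
  · rintro ⟨rfl, m, g, hg⟩
    rw [isConj_iff]
    refine ⟨⟨(φ ^ (-m)) g⁻¹, Multiplicative.ofAdd (-m)⟩, ?_⟩
    rw [SemidirectProduct.ext_iff]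
    constructor
    · simp only [SemidirectProduct.mul_left, SemidirectProduct.inv_left,
        SemidirectProduct.mul_right, SemidirectProduct.inv_right,
        zpowersHom_apply, toAdd_ofAdd, toAdd_inv, map_inv, map_mul, inv_inv,
        ← MulAut.mul_apply, ← zpow_add]
      have h := congrArg (φ ^ (-m)) hg
      simp only [map_mul, map_inv, ← MulAut.mul_apply, ← zpow_add, neg_add_cancel,
        zpow_zero, MulAut.one_apply] at h
      simpa [map_inv] using h
    · simp only [SemidirectProduct.mul_right, SemidirectProduct.inv_right,
        SemidirectProduct.mul_left]
      rw [mul_comm (Multiplicative.ofAdd (-m))]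
      group
end

section
/- If a solution g to the twisted conjugacy equation u·φ(g) = g·v exists in a δ-hyperbolic group G with symmetric φ-invariant finite generating set X, then there is a solution g with word length ‖g‖ ≤ |X|^{‖u‖+4δ+1} + ‖u‖ + ‖v‖ + 4δ. -/
/-- The word length of `g` with respect to a (symmetric) generating set `S`. -/
noncomputable def wordLength {G : Type*} [Group G] (S : Set G) (g : G) : ℕ :=
  sInf {k | ∃ l : List G, (∀ x ∈ l, x ∈ S) ∧ l.length = k ∧ l.prod = g}

/-- The word metric on `G` with respect to `S`. -/
noncomputable def wordDist {G : Type*} [Group G] (S : Set G) (g h : G) : ℕ :=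
  wordLength S (g⁻¹ * h)

/-- A geodesic segment of length `L` in the Cayley graph: a map `γ` with
`d(γ i, γ j) = |i - j|` for `i, j ≤ L`. -/
def IsGeodesic {G : Type*} [Group G] (S : Set G) (L : ℕ) (γ : ℕ → G) : Prop :=
  ∀ i j : ℕ, i ≤ L → j ≤ L → wordDist S (γ i) (γ j) = ((i : ℤ) - j).natAbs

/-- Geodesic triangles in the Cayley graph of `G` with respect to `S` are `δ`-slim:
every point on one side is within distance `δ` of one of the other two sides. -/
def TrianglesSlim {G : Type*} [Group G] (S : Set G) (δ : ℕ) : Prop :=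
  ∀ (L₁ L₂ L₃ : ℕ) (γ₁ γ₂ γ₃ : ℕ → G),
    IsGeodesic S L₁ γ₁ → IsGeodesic S L₂ γ₂ → IsGeodesic S L₃ γ₃ →
    γ₁ L₁ = γ₂ 0 → γ₂ L₂ = γ₃ 0 → γ₃ L₃ = γ₁ 0 →
    ∀ i ≤ L₁, ∃ j : ℕ, (j ≤ L₂ ∧ wordDist S (γ₁ i) (γ₂ j) ≤ δ) ∨
      (j ≤ L₃ ∧ wordDist S (γ₁ i) (γ₃ j) ≤ δ)

namespace TCaux

variable {G : Type*} [Group G]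

lemma wl_le_of_list (S : Set G) {g : G} {l : List G} (hl : ∀ x ∈ l, x ∈ S)
    (hp : l.prod = g) : wordLength S g ≤ l.length :=
  Nat.sInf_le ⟨l, hl, rfl, hp⟩

lemma wl_one (S : Set G) : wordLength S (1 : G) = 0 :=
  Nat.le_zero.mp (wl_le_of_list S (l := []) (by simp) (by simp))

section gen

variable (X : Finset G) (hgen : Subgroup.closure (X : Set G) = ⊤)
  (hsymm : ∀ x ∈ X, x⁻¹ ∈ X)

include hgen hsymm

lemma exists_word (g : G) :
    ∃ l : List G, (∀ x ∈ l, x ∈ (X : Set G)) ∧ l.prod = g := by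
  have hg : g ∈ Subgroup.closure (X : Set G) := hgen ▸ Subgroup.mem_top g
  induction hg using Subgroup.closure_induction with
  | mem x hx => exact ⟨[x], by simpa using hx, by simp⟩
  | one => exact ⟨[], by simp, by simp⟩
  | mul a b _ _ iha ihb =>
    obtain ⟨l1, h1, p1⟩ := iha
    obtain ⟨l2, h2, p2⟩ := ihb
    refine ⟨l1 ++ l2, ?_, by simp [p1, p2]⟩
    intro x hx
    rcases List.mem_append.mp hx with h | h
    exacts [h1 x h, h2 x h]
  | inv a _ iha =>
    obtain ⟨l, h1, p1⟩ := iha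
    refine ⟨(l.map (·⁻¹)).reverse, ?_, ?_⟩
    · intro x hx
      simp only [List.mem_reverse, List.mem_map] at hx
      obtain ⟨y, hy, rfl⟩ := hx
      exact hsymm y (h1 y hy)
    · rw [← p1, ← List.prod_inv_reverse]

lemma exists_min_word (g : G) :
    ∃ l : List G, (∀ x ∈ l, x ∈ (X : Set G)) ∧ l.length = wordLength (X : Set G) g ∧
      l.prod = g := by
  have hne : {k | ∃ l : List G, (∀ x ∈ l, x ∈ (X : Set G)) ∧ l.length = k ∧ l.prod = g}.Nonempty := by
    obtain ⟨l, h1, h2⟩ := exists_word X hgen hsymm g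
    exact ⟨l.length, l, h1, rfl, h2⟩
  exact Nat.sInf_mem hne

lemma wl_mul_le (g h : G) :
    wordLength (X : Set G) (g * h) ≤ wordLength (X : Set G) g + wordLength (X : Set G) h := by
  obtain ⟨l1, m1, len1, p1⟩ := exists_min_word X hgen hsymm g
  obtain ⟨l2, m2, len2, p2⟩ := exists_min_word X hgen hsymm h
  calc wordLength (X : Set G) (g * h) ≤ (l1 ++ l2).length := by
        refine wl_le_of_list _ ?_ (by simp [p1, p2])
        intro x hx
        rcases List.mem_append.mp hx with h | h
        exacts [m1 x h, m2 x h]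
    _ = _ := by simp [len1, len2]

lemma wl_inv_le (g : G) :
    wordLength (X : Set G) g⁻¹ ≤ wordLength (X : Set G) g := by
  obtain ⟨l, m, len, p⟩ := exists_min_word X hgen hsymm g
  calc wordLength (X : Set G) g⁻¹ ≤ (l.map (·⁻¹)).reverse.length := by
        refine wl_le_of_list _ ?_ ?_
        · intro x hx
          simp only [List.mem_reverse, List.mem_map] at hx
          obtain ⟨y, hy, rfl⟩ := hx
          exact hsymm y (m y hy)
        · rw [← p, ← List.prod_inv_reverse]
    _ = wordLength (X : Set G) g := by simp [len]

lemma wl_inv (g : G) : wordLength (X : Set G) g⁻¹ = wordLength (X : Set G) g :=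
  le_antisymm (wl_inv_le X hgen hsymm g)
    (by simpa using wl_inv_le X hgen hsymm g⁻¹)

lemma wd_symm (g h : G) : wordDist (X : Set G) g h = wordDist (X : Set G) h g := by
  unfold wordDist
  rw [← wl_inv X hgen hsymm (g⁻¹ * h)]
  simp [mul_inv_rev]

lemma wd_triangle (a b c : G) :
    wordDist (X : Set G) a c ≤ wordDist (X : Set G) a b + wordDist (X : Set G) b c := by
  unfold wordDist
  have : a⁻¹ * c = (a⁻¹ * b) * (b⁻¹ * c) := by group
  rw [this]
  exact wl_mul_le X hgen hsymm _ _

end gen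

lemma wd_one_left (S : Set G) (g : G) : wordDist S 1 g = wordLength S g := by
  simp [wordDist]

lemma wd_mul_left (S : Set G) (c g h : G) :
    wordDist S (c * g) (c * h) = wordDist S g h := by
  simp [wordDist, mul_assoc]

lemma isGeodesic_mul_left (S : Set G) {L : ℕ} {γ : ℕ → G} (h : IsGeodesic S L γ) (c : G) :
    IsGeodesic S L (fun t => c * γ t) := by
  intro i j hi hj
  rw [wd_mul_left]
  exact h i j hi hj

lemma isGeodesic_reverse (S : Set G) {L : ℕ} {γ : ℕ → G} (h : IsGeodesic S L γ) :
    IsGeodesic S L (fun t => γ (L - t)) := by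
  intro i j hi hj
  rw [h (L - i) (L - j) (by omega) (by omega)]
  omega

section phi

variable (X : Finset G) (φ : MulAut G) (hinv : ∀ x ∈ X, φ x ∈ X)

include hinv

lemma phi_image : ∀ x ∈ X, φ.symm x ∈ X := by
  classical
  have himg : X.image (φ : G → G) = X := by
    apply Finset.eq_of_subset_of_card_le
    · intro y hy
      obtain ⟨x, hx, rfl⟩ := Finset.mem_image.mp hy
      exact hinv x hx
    · rw [Finset.card_image_of_injective _ φ.injective]
  intro x hx
  rw [← himg] at hx
  obtain ⟨y, hy, rfl⟩ := Finset.mem_image.mp hx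
  simpa using hy

lemma wl_apply_le (hgen : Subgroup.closure (X : Set G) = ⊤)
    (hsymm : ∀ x ∈ X, x⁻¹ ∈ X) (g : G) :
    wordLength (X : Set G) (φ g) ≤ wordLength (X : Set G) g := by
  obtain ⟨l₀, m₀, len₀, p₀⟩ := exists_min_word X hgen hsymm g
  calc wordLength (X : Set G) (φ g) ≤ (l₀.map (φ : G → G)).length := by
        refine wl_le_of_list _ ?_ ?_
        · intro x hx
          obtain ⟨y, hy, rfl⟩ := List.mem_map.mp hx
          exact hinv y (m₀ y hy)
        · rw [← p₀]
          exact (map_list_prod (φ : G →* G) l₀).symm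
    _ = _ := by simp [len₀]

lemma wl_phi (hgen : Subgroup.closure (X : Set G) = ⊤)
    (hsymm : ∀ x ∈ X, x⁻¹ ∈ X) (g : G) :
    wordLength (X : Set G) (φ g) = wordLength (X : Set G) g := by
  refine le_antisymm (wl_apply_le X φ hinv hgen hsymm g) ?_
  have := wl_apply_le X φ.symm (phi_image X φ hinv) hgen hsymm (φ g)
  simpa using this

lemma wd_phi (hgen : Subgroup.closure (X : Set G) = ⊤)
    (hsymm : ∀ x ∈ X, x⁻¹ ∈ X) (g h : G) :
    wordDist (X : Set G) (φ g) (φ h) = wordDist (X : Set G) g h := by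
  unfold wordDist
  rw [← map_inv, ← map_mul]
  exact wl_phi X φ hinv hgen hsymm _

lemma isGeodesic_phi (hgen : Subgroup.closure (X : Set G) = ⊤)
    (hsymm : ∀ x ∈ X, x⁻¹ ∈ X) {L : ℕ} {γ : ℕ → G} (h : IsGeodesic (X : Set G) L γ) :
    IsGeodesic (X : Set G) L (fun t => φ (γ t)) := by
  intro i j hi hj
  rw [wd_phi X φ hinv hgen hsymm]
  exact h i j hi hj

end phi

section geod

variable (X : Finset G) (hgen : Subgroup.closure (X : Set G) = ⊤)
  (hsymm : ∀ x ∈ X, x⁻¹ ∈ X)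

include hgen hsymm

/-- prefix products of a minimal word give a geodesic from 1 to g. -/
lemma exists_geodesic (g : G) :
    ∃ γ : ℕ → G, IsGeodesic (X : Set G) (wordLength (X : Set G) g) γ ∧
      γ 0 = 1 ∧ γ (wordLength (X : Set G) g) = g := by
  obtain ⟨l, m, len, p⟩ := exists_min_word X hgen hsymm g
  set L := wordLength (X : Set G) g with hL
  refine ⟨fun t => (l.take t).prod, ?_, by simp, by simp [← len, p]⟩
  have key : ∀ i j, i ≤ j → j ≤ L →
      wordDist (X : Set G) ((l.take i).prod) ((l.take j).prod) = j - i := by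
    intro i j hij hjL
    have hle : wordDist (X : Set G) ((l.take i).prod) ((l.take j).prod) ≤ j - i := by
      have htake : l.take j = l.take i ++ (l.drop i).take (j - i) := by
        rw [← List.take_add]
        congr 1
        omega
      have : ((l.take i).prod)⁻¹ * (l.take j).prod = ((l.drop i).take (j - i)).prod := by
        rw [htake, List.prod_append]
        group
      unfold wordDist
      rw [this]
      calc wordLength (X : Set G) ((l.drop i).take (j - i)).prod
          ≤ ((l.drop i).take (j - i)).length :=
            wl_le_of_list _ (fun x hx => m x (List.drop_subset _ _ (List.take_subset _ _ hx))) rfl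
        _ ≤ j - i := by simp [List.length_take, List.length_drop]
    have hge : L ≤ i + wordDist (X : Set G) ((l.take i).prod) ((l.take j).prod) + (L - j) := by
      have h1 : wordLength (X : Set G) ((l.take i).prod) ≤ i :=
        le_trans (wl_le_of_list _ (fun x hx => m x (List.take_subset _ _ hx)) rfl)
          (by simp [List.length_take])
      have h2 : wordDist (X : Set G) ((l.take j).prod) g ≤ L - j := by
        have hdrop : ((l.take j).prod)⁻¹ * g = (l.drop j).prod := by
          rw [← p]
          nth_rewrite 2 [← List.take_append_drop j l]
          rw [List.prod_append]
          group
        unfold wordDist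
        rw [hdrop]
        calc wordLength (X : Set G) (l.drop j).prod ≤ (l.drop j).length :=
              wl_le_of_list _ (fun x hx => m x (List.drop_subset _ _ hx)) rfl
          _ ≤ L - j := by simp [List.length_drop, len]
      calc L = wordLength (X : Set G) g := hL
        _ = wordDist (X : Set G) 1 g := (wd_one_left _ g).symm
        _ ≤ wordDist (X : Set G) 1 ((l.take i).prod) +
              wordDist (X : Set G) ((l.take i).prod) ((l.take j).prod) +
              wordDist (X : Set G) ((l.take j).prod) g := by
            calc wordDist (X : Set G) 1 g ≤ wordDist (X : Set G) 1 ((l.take i).prod) +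
                  wordDist (X : Set G) ((l.take i).prod) g := wd_triangle X hgen hsymm _ _ _
              _ ≤ _ := by
                  have := wd_triangle X hgen hsymm ((l.take i).prod) ((l.take j).prod) g
                  omega
        _ ≤ i + wordDist (X : Set G) ((l.take i).prod) ((l.take j).prod) + (L - j) := by
            rw [wd_one_left]
            omega
    omega
  intro i j hi hj
  rcases le_total i j with h | h
  · rw [key i j h hj]; omega
  · rw [wd_symm X hgen hsymm, key j i h hi]; omega

end geod

section count

open Classical in
noncomputable def wordsOf (X : Finset G) : ℕ → Finset (List G)
  | 0 => {[]}
  | k+1 => (X ×ˢ wordsOf X k).image fun p => p.1 :: p.2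

lemma card_wordsOf (X : Finset G) (k : ℕ) : (wordsOf X k).card ≤ X.card ^ k := by
  classical
  induction k with
  | zero => simp [wordsOf]
  | succ k ih =>
    calc (wordsOf X (k+1)).card ≤ (X ×ˢ wordsOf X k).card := Finset.card_image_le
      _ = X.card * (wordsOf X k).card := Finset.card_product _ _
      _ ≤ X.card * X.card ^ k := Nat.mul_le_mul_left _ ih
      _ = X.card ^ (k+1) := by ring

set_option linter.unusedSectionVars false in
lemma mem_wordsOf (X : Finset G) {l : List G} (hm : ∀ x ∈ l, x ∈ X) :
    l ∈ wordsOf X l.length := by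
  classical
  induction l with
  | nil => simp [wordsOf]
  | cons a l ih =>
    simp only [wordsOf, List.length_cons, Finset.mem_image]
    exact ⟨(a, l), Finset.mem_product.mpr ⟨hm a (by simp), ih fun x hx => hm x (by simp [hx])⟩, rfl⟩

lemma geom_lt {c : ℕ} (hc : 2 ≤ c) (n : ℕ) : ∑ k ∈ Finset.range n, c ^ k < c ^ n := by
  induction n with
  | zero => simp
  | succ n ih =>
    rw [Finset.sum_range_succ, pow_succ]
    have : c ^ n * 2 ≤ c ^ n * c := Nat.mul_le_mul_left _ hc
    omega

end count

end TCaux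

open TCaux

/-- If a solution `g` to the twisted conjugacy equation `u·φ(g) = g·v` exists in a
`δ`-hyperbolic group `G` with symmetric `φ`-invariant finite generating set `X`, then
there is a solution `g` of word length `‖g‖ ≤ |X|^{‖u‖+4δ+1} + ‖u‖ + ‖v‖ + 4δ`. -/
theorem bounded_solution_of_twisted_conjugacy
    (G : Type*) [Group G] (X : Finset G)
    (hgen : Subgroup.closure (X : Set G) = ⊤)
    (hsymm : ∀ x ∈ X, x⁻¹ ∈ X)
    (φ : MulAut G) (hinv : ∀ x ∈ X, φ x ∈ X)
    (δ : ℕ) (hδ : TrianglesSlim (X : Set G) δ)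
    (u v : G) (hexists : ∃ g : G, u * φ g = g * v) :
    ∃ g : G, u * φ g = g * v ∧
      wordLength (X : Set G) g ≤
        X.card ^ (wordLength (X : Set G) u + 4 * δ + 1) +
          wordLength (X : Set G) u + wordLength (X : Set G) v + 4 * δ := by
  classical
  obtain ⟨g₀, hg₀⟩ := hexists
  rcases le_or_gt X.card 1 with hcard | hcard2
  · -- degenerate cases: |X| ≤ 1
    rcases Nat.le_one_iff_eq_zero_or_eq_one.mp hcard with h | h
    · -- X = ∅ : G is trivial
      have hX : X = ∅ := Finset.card_eq_zero.mp h
      have htriv : ∀ x : G, x = 1 := by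
        intro x
        have hx : x ∈ (⊤ : Subgroup G) := trivial
        rw [← hgen, hX] at hx
        simpa [Subgroup.mem_bot] using hx
      refine ⟨g₀, hg₀, ?_⟩
      rw [htriv g₀, wl_one]
      exact Nat.zero_le _
    · -- X = {x} with x = x⁻¹ : every element has length ≤ 1
      obtain ⟨x, hX⟩ := Finset.card_eq_one.mp h
      have hxX : x ∈ X := by simp [hX]
      have hxinv : x⁻¹ = x := by
        have := hsymm x hxX
        rw [hX] at this
        simpa using this
      have hsq : x * x = 1 := by
        nth_rewrite 2 [← hxinv]
        simp
      have hsmall : ∀ w : G, w = 1 ∨ w = x := by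
        intro w
        have hw : w ∈ Subgroup.closure (X : Set G) := hgen ▸ Subgroup.mem_top w
        induction hw using Subgroup.closure_induction with
        | mem y hy =>
          right
          have : y ∈ X := hy
          rw [hX] at this
          simpa using this
        | one => left; rfl
        | mul a b _ _ iha ihb =>
          rcases iha with rfl | rfl <;> rcases ihb with rfl | rfl <;> simp [hsq]
        | inv a _ iha =>
          rcases iha with rfl | rfl
          · left; simp
          · right; exact hxinv
      have hwl : wordLength (X : Set G) g₀ ≤ 1 := by
        rcases hsmall g₀ with h1 | h1
        · rw [h1, wl_one]; omega
        · rw [h1]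
          simpa using wl_le_of_list (X : Set G) (l := [x]) (by simpa using hxX) (by simp)
      refine ⟨g₀, hg₀, ?_⟩
      have hpow : X.card ^ (wordLength (X : Set G) u + 4 * δ + 1) = 1 := by
        rw [h, one_pow]
      omega
  · -- main case : |X| ≥ 2
    have hPne : {n : ℕ | ∃ g : G, u * φ g = g * v ∧ wordLength (X : Set G) g = n}.Nonempty :=
      ⟨_, g₀, hg₀, rfl⟩
    obtain ⟨g, hg, hglen⟩ := Nat.sInf_mem hPne
    refine ⟨g, hg, ?_⟩
    by_contra hbig
    push_neg at hbig
    have hpow2 : 2 ≤ X.card ^ (wordLength (X : Set G) u + 4 * δ + 1) :=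
      le_trans hcard2 (Nat.le_self_pow (by omega) _)
    -- geodesics for the four sides
    obtain ⟨γ, hγ, hγ0, hγL⟩ := exists_geodesic X hgen hsymm g
    obtain ⟨β, hβ, hβ0, hβL⟩ := exists_geodesic X hgen hsymm v
    obtain ⟨μ, hμ, hμ0, hμL⟩ := exists_geodesic X hgen hsymm u
    obtain ⟨α, hα, hα0, hαL⟩ := exists_geodesic X hgen hsymm (u * φ g)
    set Lu := wordLength (X : Set G) u with hLu
    set Lv := wordLength (X : Set G) v with hLv
    set Lg := wordLength (X : Set G) g with hLg
    set Ld := wordLength (X : Set G) (u * φ g) with hLd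
    have hwlγ : ∀ t, t ≤ Lg → wordLength (X : Set G) (γ t) = t := by
      intro t ht
      have h0 := hγ 0 t (Nat.zero_le _) ht
      rw [hγ0] at h0
      rw [← wd_one_left (X : Set G) (γ t), h0]
      omega
    -- the fellow-travelling property via two slim triangles
    have main : ∀ t, Lu + 2 * δ + 1 ≤ t → t + (Lv + 2 * δ + 1) ≤ Lg →
        ∃ s ≤ Lg, wordDist (X : Set G) (γ t) (u * φ (γ s)) ≤ 2 * δ := by
      intro t ht1 ht2
      have htLg : t ≤ Lg := by omega
      -- triangle A : 1, g, g*v  with sides γ, g·β, reverse α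
      obtain ⟨j, hj⟩ := hδ Lg Lv Ld γ (fun r => g * β r) (fun r => α (Ld - r)) hγ
        (isGeodesic_mul_left (X : Set G) hβ g) (isGeodesic_reverse (X : Set G) hα)
        (by simp [hβ0, hγL]) (by simp [hβL, hαL, hg]) (by simp [hα0, hγ0])
        t htLg
      rcases hj with ⟨hjLv, hjd⟩ | ⟨hjLd, hjd⟩
      · -- close to side [g, g*v] : impossible since t is far from g
        exfalso
        have hjd' : wordDist (X : Set G) (γ t) (g * β j) ≤ δ := hjd
        have e1 : wordDist (X : Set G) 1 (γ t) = t := by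
          rw [wd_one_left]; exact hwlγ t htLg
        have eg : wordDist (X : Set G) 1 g = Lg := by
          rw [wd_one_left]
        have e2 : wordDist (X : Set G) (g * β j) g ≤ j := by
          have h2 := hβ j 0 hjLv (Nat.zero_le _)
          have h3 : wordDist (X : Set G) (g * β j) (g * β 0) = j := by
            rw [wd_mul_left, h2]; omega
          rw [hβ0, mul_one] at h3
          omega
        have t1 := wd_triangle X hgen hsymm (1 : G) (γ t) g
        have t2 := wd_triangle X hgen hsymm (γ t) (g * β j) g
        omega
      · -- close to the diagonal α at the point k = Ld - j
        have hjd' : wordDist (X : Set G) (γ t) (α (Ld - j)) ≤ δ := hjd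
        -- triangle B : 1, u*φ(g), u  with sides α, u·φ(reverse γ), reverse μ
        obtain ⟨m, hm⟩ := hδ Ld Lg Lu α (fun r => u * φ (γ (Lg - r))) (fun r => μ (Lu - r))
          hα
          (isGeodesic_mul_left (X : Set G) (isGeodesic_phi X φ hinv hgen hsymm
            (isGeodesic_reverse (X : Set G) hγ)) u)
          (isGeodesic_reverse (X : Set G) hμ)
          (by simp [hγL, hαL]) (by simp [hγ0, hμL]) (by simp [hμ0, hα0])
          (Ld - j) (by omega)
        rcases hm with ⟨hmLg, hmd⟩ | ⟨hmLu, hmd⟩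
        · -- close to side [u*φ(g), u] : this is the desired conclusion
          have hmd' : wordDist (X : Set G) (α (Ld - j)) (u * φ (γ (Lg - m))) ≤ δ := hmd
          refine ⟨Lg - m, by omega, ?_⟩
          have t1 := wd_triangle X hgen hsymm (γ t) (α (Ld - j)) (u * φ (γ (Lg - m)))
          omega
        · -- close to side [u, 1] : impossible since t is far from 1
          exfalso
          have hmd' : wordDist (X : Set G) (α (Ld - j)) (μ (Lu - m)) ≤ δ := hmd
          have e1 : wordDist (X : Set G) 1 (γ t) = t := by
            rw [wd_one_left]; exact hwlγ t htLg
          have e2 : wordDist (X : Set G) 1 (μ (Lu - m)) = Lu - m := by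
            have h2 := hμ 0 (Lu - m) (Nat.zero_le _) (by omega)
            rw [hμ0] at h2
            rw [h2]; omega
          have t1 := wd_triangle X hgen hsymm (1 : G) (μ (Lu - m)) (γ t)
          have t2 := wd_triangle X hgen hsymm (μ (Lu - m)) (α (Ld - j)) (γ t)
          have s1 := wd_symm X hgen hsymm (γ t) (α (Ld - j))
          have s2 := wd_symm X hgen hsymm (α (Ld - j)) (μ (Lu - m))
          omega
    -- the twisted displacement elements are short
    have hbound : ∀ t, Lu + 2 * δ + 1 ≤ t → t + (Lv + 2 * δ + 1) ≤ Lg →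
        wordLength (X : Set G) ((γ t)⁻¹ * (u * φ (γ t))) ≤ Lu + 4 * δ := by
      intro t h1 h2
      have htLg : t ≤ Lg := by omega
      obtain ⟨s, hs, hd⟩ := main t h1 h2
      have e_t : wordLength (X : Set G) (γ t) = t := hwlγ t htLg
      have e_s : wordLength (X : Set G) (γ s) = s := hwlγ s hs
      have e_sφ : wordLength (X : Set G) (φ (γ s)) = s := by
        rw [wl_phi X φ hinv hgen hsymm]; exact e_s
      have d1 := wl_mul_le X hgen hsymm u (φ (γ s))
      -- t ≤ Lu + s + 2δ
      have d2 : t ≤ Lu + s + 2 * δ := by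
        have t1 := wd_triangle X hgen hsymm (1 : G) (u * φ (γ s)) (γ t)
        have s1 := wd_symm X hgen hsymm (γ t) (u * φ (γ s))
        have e1 : wordDist (X : Set G) 1 (γ t) = t := by
          rw [wd_one_left]; exact hwlγ t htLg
        have e2 : wordDist (X : Set G) 1 (u * φ (γ s)) = wordLength (X : Set G) (u * φ (γ s)) :=
          wd_one_left _ _
        omega
      -- s ≤ Lu + t + 2δ
      have d3 : s ≤ Lu + t + 2 * δ := by
        have e4 : wordDist (X : Set G) u (u * φ (γ s)) = s := by
          show wordLength (X : Set G) (u⁻¹ * (u * φ (γ s))) = s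
          rw [inv_mul_cancel_left]
          exact e_sφ
        have e5 : wordDist (X : Set G) u 1 = Lu := by
          show wordLength (X : Set G) (u⁻¹ * 1) = Lu
          rw [mul_one, wl_inv X hgen hsymm]
        have e1 : wordDist (X : Set G) 1 (γ t) = t := by
          rw [wd_one_left]; exact hwlγ t htLg
        have t1 := wd_triangle X hgen hsymm u (1 : G) (u * φ (γ s))
        have t2 := wd_triangle X hgen hsymm (1 : G) (γ t) (u * φ (γ s))
        omega
      have dst := hγ s t hs htLg
      have dfin : wordDist (X : Set G) (u * φ (γ s)) (u * φ (γ t)) =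
          wordDist (X : Set G) (γ s) (γ t) := by
        rw [wd_mul_left, wd_phi X φ hinv hgen hsymm]
      have tfin := wd_triangle X hgen hsymm (γ t) (u * φ (γ s)) (u * φ (γ t))
      have goalEq : wordLength (X : Set G) ((γ t)⁻¹ * (u * φ (γ t))) =
          wordDist (X : Set G) (γ t) (u * φ (γ t)) := rfl
      omega
    -- pigeonhole over the interval of middle parameters
    have hmaps : ∀ t ∈ Finset.Icc (Lu + 2 * δ + 1) (Lg - (Lv + 2 * δ + 1)),
        (γ t)⁻¹ * (u * φ (γ t)) ∈
          (Finset.range (Lu + 4 * δ + 1)).biUnion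
            (fun k => (wordsOf X k).image List.prod) := by
      intro t ht
      rw [Finset.mem_Icc] at ht
      have h1 : Lu + 2 * δ + 1 ≤ t := ht.1
      have h2 : t + (Lv + 2 * δ + 1) ≤ Lg := by omega
      have hb := hbound t h1 h2
      obtain ⟨l, m, len, p⟩ := exists_min_word X hgen hsymm ((γ t)⁻¹ * (u * φ (γ t)))
      refine Finset.mem_biUnion.mpr ⟨l.length, Finset.mem_range.mpr (by omega), ?_⟩
      exact Finset.mem_image.mpr ⟨l, mem_wordsOf X (fun x hx => m x hx), p⟩
    have hcardT : ((Finset.range (Lu + 4 * δ + 1)).biUnion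
        (fun k => (wordsOf X k).image List.prod)).card <
        (Finset.Icc (Lu + 2 * δ + 1) (Lg - (Lv + 2 * δ + 1))).card := by
      have c1 : ((Finset.range (Lu + 4 * δ + 1)).biUnion
          (fun k => (wordsOf X k).image List.prod)).card <
          X.card ^ (Lu + 4 * δ + 1) := by
        calc ((Finset.range (Lu + 4 * δ + 1)).biUnion
              (fun k => (wordsOf X k).image List.prod)).card
            ≤ ∑ k ∈ Finset.range (Lu + 4 * δ + 1), ((wordsOf X k).image List.prod).card :=
              Finset.card_biUnion_le
          _ ≤ ∑ k ∈ Finset.range (Lu + 4 * δ + 1), X.card ^ k := by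
              refine Finset.sum_le_sum ?_
              intro k _
              exact le_trans Finset.card_image_le (card_wordsOf X k)
          _ < X.card ^ (Lu + 4 * δ + 1) := geom_lt hcard2 _
      rw [Nat.card_Icc]
      omega
    obtain ⟨t1, ht1, t2, ht2, hne, heq⟩ :=
      Finset.exists_ne_map_eq_of_card_lt_of_maps_to hcardT hmaps
    -- from a repetition we build a strictly shorter solution : contradiction
    have short : ∀ s t : ℕ, s ∈ Finset.Icc (Lu + 2 * δ + 1) (Lg - (Lv + 2 * δ + 1)) →
        t ∈ Finset.Icc (Lu + 2 * δ + 1) (Lg - (Lv + 2 * δ + 1)) → s < t →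
        (γ s)⁻¹ * (u * φ (γ s)) = (γ t)⁻¹ * (u * φ (γ t)) → False := by
      intro s t hsI htI hst hh
      rw [Finset.mem_Icc] at hsI htI
      have hsLg : s ≤ Lg := by omega
      have htLg : t ≤ Lg := by omega
      have hsol : u * φ (γ s * ((γ t)⁻¹ * g)) = (γ s * ((γ t)⁻¹ * g)) * v := by
        have key : u * φ (γ s) = γ s * ((γ t)⁻¹ * (u * φ (γ t))) := by
          rw [← hh]
          group
        calc u * φ (γ s * ((γ t)⁻¹ * g))
            = (u * φ (γ s)) * ((φ (γ t))⁻¹ * φ g) := by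
              rw [map_mul, map_mul, map_inv]
              group
          _ = (γ s * ((γ t)⁻¹ * (u * φ (γ t)))) * ((φ (γ t))⁻¹ * φ g) := by rw [key]
          _ = γ s * ((γ t)⁻¹ * (u * φ g)) := by group
          _ = γ s * ((γ t)⁻¹ * (g * v)) := by rw [hg]
          _ = (γ s * ((γ t)⁻¹ * g)) * v := by group
      have h1 : wordLength (X : Set G) (γ s) = s := hwlγ s hsLg
      have h2 : wordLength (X : Set G) ((γ t)⁻¹ * g) = Lg - t := by
        have h3 := hγ t Lg htLg le_rfl
        rw [hγL] at h3
        have h4 : wordDist (X : Set G) (γ t) g = Lg - t := by rw [h3]; omega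
        exact h4
      have h4 := wl_mul_le X hgen hsymm (γ s) ((γ t)⁻¹ * g)
      have hmin : sInf {n : ℕ | ∃ g : G, u * φ g = g * v ∧ wordLength (X : Set G) g = n} ≤
          wordLength (X : Set G) (γ s * ((γ t)⁻¹ * g)) := Nat.sInf_le ⟨_, hsol, rfl⟩
      omega
    rcases hne.lt_or_gt with hlt | hlt
    · exact short t1 t2 ht1 ht2 hlt heq
    · exact short t2 t1 ht2 ht1 hlt heq.symm
end

section
/- The group defined by the presentation ⟨x_1,…,x_n | x_i^{ε_0} x_{i+q_1}^{ε_1} ⋯ x_{i+q_{r-1}}^{ε_{r-1}} x_{i+q_r} = x_{i+k}^{ε_0} x_{i+k+q_1}^{ε_1} ⋯ x_{i+k+q_{r-1}}^{ε_{r-1}} for 1 ≤ i ≤ n (subscripts mod n)⟩ is isomorphic to the group defined by the cyclic presentation ⟨y_1,…,y_n | y_{i+q_r} = (y_i⁻¹y_{i+k})^{ε_0}(y_{i+q_1}⁻¹y_{i+q_1+k})^{ε_1} ⋯ (y_{i+q_{r-1}}⁻¹y_{i+q_{r-1}+k})^{ε_{r-1}} for 1 ≤ i ≤ n⟩. -/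
theorem rel_eq_one' {α : Type*} {rels : Set (FreeGroup α)} {z : FreeGroup α} (hz : z ∈ rels) :
    (QuotientGroup.mk' (Subgroup.normalClosure rels)) z = 1 :=
  (QuotientGroup.eq_one_iff _).2 (Subgroup.subset_normalClosure hz)


/-- Theorem (newSVpres): the group defined by
`⟨x₁,…,xₙ ∣ x_i^{ε₀} x_{i+q₁}^{ε₁} ⋯ x_{i+q_{r-1}}^{ε_{r-1}} x_{i+q_r}
  = x_{i+k}^{ε₀} x_{i+k+q₁}^{ε₁} ⋯ x_{i+k+q_{r-1}}^{ε_{r-1}} (1 ≤ i ≤ n)⟩`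
is isomorphic to the group defined by the cyclic presentation
`⟨y₁,…,yₙ ∣ y_{i+q_r} = (y_i⁻¹y_{i+k})^{ε₀}(y_{i+q₁}⁻¹y_{i+q₁+k})^{ε₁} ⋯
  (y_{i+q_{r-1}}⁻¹y_{i+q_{r-1}+k})^{ε_{r-1}} (1 ≤ i ≤ n)⟩`,
subscripts mod `n`.  Here `Q : ℕ → ℤ` encodes `(q₀, q₁, …, q_r)` with `q₀ = 0`, and
`ε : ℕ → ℤ` encodes `(ε₀, …, ε_{r-1})`. -/
theorem sv_presentation_iso_cyclic_presentation
    (n : ℕ) [NeZero n] (hn : 2 ≤ n) (r : ℕ) (hr : 1 ≤ r)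
    (k : ℤ) (Q : ℕ → ℤ) (hQ0 : Q 0 = 0) (ε : ℕ → ℤ) :
    Nonempty
      (PresentedGroup (Set.range fun i : ZMod n =>
          ((List.range r).map fun j =>
              (FreeGroup.of (i + (Q j : ZMod n))) ^ (ε j)).prod *
            FreeGroup.of (i + (Q r : ZMod n)) *
            (((List.range r).map fun j =>
              (FreeGroup.of (i + (k : ZMod n) + (Q j : ZMod n))) ^ (ε j)).prod)⁻¹) ≃*
        PresentedGroup (Set.range fun i : ZMod n =>
          FreeGroup.of (i + (Q r : ZMod n)) *
            (((List.range r).map fun j =>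
              ((FreeGroup.of (i + (Q j : ZMod n)))⁻¹ *
                FreeGroup.of (i + (Q j : ZMod n) + (k : ZMod n))) ^ (ε j)).prod)⁻¹)) := by
  set relX : ZMod n → FreeGroup (ZMod n) := fun i =>
    ((List.range r).map fun j =>
        (FreeGroup.of (i + (Q j : ZMod n))) ^ (ε j)).prod *
      FreeGroup.of (i + (Q r : ZMod n)) *
      (((List.range r).map fun j =>
        (FreeGroup.of (i + (k : ZMod n) + (Q j : ZMod n))) ^ (ε j)).prod)⁻¹ with hrelX
  set relY : ZMod n → FreeGroup (ZMod n) := fun i =>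
    FreeGroup.of (i + (Q r : ZMod n)) *
      (((List.range r).map fun j =>
        ((FreeGroup.of (i + (Q j : ZMod n)))⁻¹ *
          FreeGroup.of (i + (Q j : ZMod n) + (k : ZMod n))) ^ (ε j)).prod)⁻¹ with hrelY
  set X := PresentedGroup (Set.range relX)
  set Y := PresentedGroup (Set.range relY)
  set oX : ZMod n → X := PresentedGroup.of with hoX
  set oY : ZMod n → Y := PresentedGroup.of with hoY
  have hidx : ∀ a b : ZMod n, a + b - (Q r : ZMod n) = a - (Q r : ZMod n) + b := by
    intro a b; ring
  -- key relation in Y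
  have keyY : ∀ i : ZMod n,
      ((List.range r).map fun j => ((oY (i + (Q j : ZMod n)))⁻¹ *
        oY (i + (Q j : ZMod n) + (k : ZMod n))) ^ (ε j)).prod = oY (i + (Q r : ZMod n)) := by
    intro i
    have h := rel_eq_one' (rels := Set.range relY) ⟨i, rfl⟩
    rw [hrelY] at h
    simp only [map_mul, map_inv, map_list_prod, List.map_map, Function.comp_def, map_zpow] at h
    have h' := mul_eq_one_iff_eq_inv.1 h
    rw [inv_inv] at h'
    exact h'.symm
  -- key relation in X
  have keyX : ∀ i : ZMod n,
      (((List.range r).map fun j => (oX (i + (Q j : ZMod n))) ^ (ε j)).prod)⁻¹ *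
        ((List.range r).map fun j =>
          (oX (i + (k : ZMod n) + (Q j : ZMod n))) ^ (ε j)).prod
        = oX (i + (Q r : ZMod n)) := by
    intro i
    have h := rel_eq_one' (rels := Set.range relX) ⟨i, rfl⟩
    rw [hrelX] at h
    simp only [map_mul, map_inv, map_list_prod, List.map_map, Function.comp_def, map_zpow] at h
    rw [mul_inv_eq_one] at h
    have h' : ((List.range r).map fun j => (oX (i + (Q j : ZMod n))) ^ (ε j)).prod *
        oX (i + (Q r : ZMod n)) =
        ((List.range r).map fun j =>
          (oX (i + (k : ZMod n) + (Q j : ZMod n))) ^ (ε j)).prod := h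
    rw [← h']
    group
  -- forward map
  set f : ZMod n → Y := fun m =>
    (oY (m - (Q r : ZMod n)))⁻¹ * oY (m - (Q r : ZMod n) + (k : ZMod n)) with hf
  have hfrel : ∀ z ∈ Set.range relX, FreeGroup.lift f z = 1 := by
    rintro _ ⟨i, rfl⟩
    simp only [hrelX, map_mul, map_inv, map_list_prod, List.map_map, Function.comp_def,
      map_zpow, FreeGroup.lift_apply_of, hf]
    simp only [hidx, sub_add_cancel]
    rw [keyY (i - (Q r : ZMod n)), keyY (i - (Q r : ZMod n) + (k : ZMod n)),
      show i - (Q r : ZMod n) + (Q r : ZMod n) = i from sub_add_cancel _ _,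
      show i - (Q r : ZMod n) + (k : ZMod n) + (Q r : ZMod n) = i + (k : ZMod n) by ring]
    group
  set g : ZMod n → X := fun m =>
    ((List.range r).map fun j => (oX (m + (Q j : ZMod n))) ^ (ε j)).prod with hg
  have hgrel : ∀ z ∈ Set.range relY, FreeGroup.lift g z = 1 := by
    rintro _ ⟨i, rfl⟩
    simp only [hrelY, map_mul, map_inv, map_list_prod, List.map_map, Function.comp_def,
      map_zpow, FreeGroup.lift_apply_of, hg]
    simp only [keyX]
    rw [mul_inv_eq_one]
    congr 1
    apply List.map_congr_left
    intro j _
    congr 2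
    ring
  set φ : X →* Y := PresentedGroup.toGroup hfrel with hφ
  set ψ : Y →* X := PresentedGroup.toGroup hgrel with hψ
  refine ⟨MonoidHom.toMulEquiv φ ψ ?_ ?_⟩
  · apply PresentedGroup.ext
    intro m
    rw [MonoidHom.comp_apply, MonoidHom.id_apply, hφ, PresentedGroup.toGroup.of, hf]
    simp only [map_mul, map_inv, hψ, hoY, PresentedGroup.toGroup.of]
    simp only [hg]
    rw [keyX (m - (Q r : ZMod n)),
      show m - (Q r : ZMod n) + (Q r : ZMod n) = m from sub_add_cancel _ _, hoX]
  · apply PresentedGroup.ext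
    intro m
    rw [MonoidHom.comp_apply, MonoidHom.id_apply, hψ, PresentedGroup.toGroup.of, hg]
    simp only [map_list_prod, List.map_map, Function.comp_def, map_zpow, hφ, hoX,
      PresentedGroup.toGroup.of]
    simp only [hf]
    simp only [hidx]
    rw [keyY (m - (Q r : ZMod n)),
      show m - (Q r : ZMod n) + (Q r : ZMod n) = m from sub_add_cancel _ _, hoY]
end

section
/- The group H(4,3) = H_4(3,1), defined by the presentation ⟨x_1,x_2,x_3,x_4 | x_i x_{i+3} = x_{i+1} for 1 ≤ i ≤ 4, subscripts mod 4⟩, is cyclic of order 5. -/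
/-- The relators `x_i x_{i+3} x_{i+1}⁻¹` (subscripts mod 4) of the presentation
`H(4,3) = H₄(3,1) = ⟨x₁,…,x₄ ∣ x_i x_{i+3} = x_{i+1} (1 ≤ i ≤ 4)⟩`. -/
def relsH43 : Set (FreeGroup (ZMod 4)) :=
  Set.range fun i : ZMod 4 =>
    FreeGroup.of i * FreeGroup.of (i + 3) * (FreeGroup.of (i + 1))⁻¹

/-!
With subscripts in `ZMod 4`, the relations give `x₃ = x₂x₁ = x₁x₀x₁`, so `x₀x₃ = x₁` becomes
`x₀x₁x₀ = 1`, i.e. `x₁ = x₀⁻²`. Then `x₂ = x₀⁻¹`, `x₃ = x₀⁻³`, and the last relation `x₃x₂ = x₀`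
reads `x₀⁻⁴ = x₀`. Hence the group is generated by `x₀`, which satisfies `x₀⁵ = 1`; and
`x₀, x₁, x₂, x₃ ↦ 2, -4, -2, -6` (the exponents times `2`) defines a homomorphism to `ℤ/5`,
so `x₀ ≠ 1` and `x₀` has order `5`.
-/

namespace H43

open Subgroup

section Relations

variable {G : Type*} [Group G] {a b c d : G}

theorem eq_inv_sq_of_rels (h0 : a * d = b) (h1 : b * a = c) (h2 : c * b = d) :
    b = (a ^ 2)⁻¹ := by
  have h : a * (b * a * b) = b := by rw [h1, h2]; exact h0
  calc b = a⁻¹ * (a * (b * a * b)) * b⁻¹ * a⁻¹ := by group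
    _ = (a ^ 2)⁻¹ := by rw [h]; group

theorem eq_inv_of_rels (h0 : a * d = b) (h1 : b * a = c) (h2 : c * b = d) : c = a⁻¹ := by
  rw [← h1, eq_inv_sq_of_rels h0 h1 h2]
  group

theorem eq_inv_cube_of_rels (h0 : a * d = b) (h1 : b * a = c) (h2 : c * b = d) :
    d = (a ^ 3)⁻¹ := by
  rw [← h2, eq_inv_sq_of_rels h0 h1 h2, eq_inv_of_rels h0 h1 h2]
  group

theorem pow_five_eq_one_of_rels (h0 : a * d = b) (h1 : b * a = c) (h2 : c * b = d)
    (h3 : d * c = a) : a ^ 5 = 1 := by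
  rw [eq_inv_cube_of_rels h0 h1 h2, eq_inv_of_rels h0 h1 h2] at h3
  calc a ^ 5 = a * ((a ^ 3)⁻¹ * a⁻¹)⁻¹ := by group
    _ = 1 := by rw [h3, mul_inv_cancel]

end Relations

open PresentedGroup

local notation "x" => (PresentedGroup.of : ZMod 4 → PresentedGroup relsH43)

theorem of_mul_of_add_three (i : ZMod 4) : x i * x (i + 3) = x (i + 1) :=
  mk_eq_mk_of_mul_inv_mem ⟨i, rfl⟩

theorem of_mem_zpowers_of_zero : ∀ i, x i ∈ zpowers (x 0) := by
  have h0 := of_mul_of_add_three 0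
  have h1 := of_mul_of_add_three 1
  have h2 := of_mul_of_add_three 2
  intro i
  match i with
  | 0 => exact mem_zpowers _
  | 1 => exact eq_inv_sq_of_rels h0 h1 h2 ▸ inv_mem (pow_mem (mem_zpowers _) 2)
  | 2 => exact eq_inv_of_rels h0 h1 h2 ▸ inv_mem (mem_zpowers _)
  | 3 => exact eq_inv_cube_of_rels h0 h1 h2 ▸ inv_mem (pow_mem (mem_zpowers _) 3)

theorem zpowers_of_zero_eq_top : zpowers (x 0) = ⊤ := by
  rw [eq_top_iff, ← closure_range_of relsH43, closure_le]
  rintro _ ⟨i, rfl⟩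
  exact of_mem_zpowers_of_zero i

theorem pow_five_of_zero : x 0 ^ 5 = 1 :=
  pow_five_eq_one_of_rels (of_mul_of_add_three 0) (of_mul_of_add_three 1)
    (of_mul_of_add_three 2) (of_mul_of_add_three 3)

def toZMod5 : PresentedGroup relsH43 →* Multiplicative (ZMod 5) :=
  toGroup (f := fun i : ZMod 4 => .ofAdd ((![2, 1, 3, 4] : Fin 4 → ZMod 5) i)) <| by
    rintro _ ⟨i, rfl⟩
    fin_cases i <;> decide

theorem of_zero_ne_one : x 0 ≠ 1 := fun h => by
  have h' : toZMod5 (x 0) = 1 := by rw [h, map_one]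
  rw [toZMod5, toGroup.of] at h'
  exact absurd h' (by decide)

theorem orderOf_of_zero : orderOf (x 0) = 5 :=
  have : Fact (Nat.Prime 5) := ⟨by norm_num⟩
  orderOf_eq_prime pow_five_of_zero of_zero_ne_one

end H43

/-- The group `H(4,3) = H₄(3,1)` is cyclic of order `5`. -/
theorem H43_cyclic_of_order_five :
    IsCyclic (PresentedGroup relsH43) ∧ Nat.card (PresentedGroup relsH43) = 5 :=
  ⟨isCyclic_iff_exists_zpowers_eq_top.mpr ⟨_, H43.zpowers_of_zero_eq_top⟩,
    (orderOf_eq_card_of_zpowers_eq_top H43.zpowers_of_zero_eq_top).symm.trans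
      H43.orderOf_of_zero⟩
end

section
/- Let X be the 2-complex of the presentation ⟨a, c | U(a,c), [a,c^n]⟩ where U(a,c) = a^{α_1}c^{γ_1}⋯a^{α_k}c^{γ_k} with Σα_i = 1 and Σγ_i = 0. Then the Schur multiplier H_2(π_1(X); ℤ) is trivial. -/
/-!
In `Q = F / [F, R]` the image of `R` is central; write `u` and `v` for the images of `U` and
`[a, cⁿ]`. Since `v` is central, conjugation by `cⁿ` acts on `Q` as `w ↦ w · v^σ(w)`, where `σ`
is the exponent sum in `a`: this holds on the generators, as it fixes `c` and sends `a` to `a v`.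
Applied to the central `u` with `σ U = 1` it gives `u = u v`, so `v = 1` and `R / [F, R]` is
generated by `u`. An element of `R ⊓ [F, F]` is then `Uᵐ` modulo `[F, R]`, and `σ` forces `m = 0`.
-/

/-- The word `U(a,c) = a^{α₁}c^{γ₁}⋯a^{α_k}c^{γ_k}` in the free group on `{a, c}`
(with `a` coded by `true` and `c` by `false`). -/
def Uword (k : ℕ) (α γ : ℕ → ℤ) : FreeGroup Bool :=
  ((List.range k).map fun i =>
    (FreeGroup.of true) ^ (α i) * (FreeGroup.of false) ^ (γ i)).prod

/-- The relators of the presentation `X = ⟨a, c ∣ U(a,c), [a,cⁿ]⟩`. -/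
def relsX (n k : ℕ) (α γ : ℕ → ℤ) : Set (FreeGroup Bool) :=
  {Uword k α γ,
    (FreeGroup.of true)⁻¹ * ((FreeGroup.of false) ^ n)⁻¹ *
      FreeGroup.of true * (FreeGroup.of false) ^ n}

open Subgroup

namespace Subgroup

variable {G : Type*} [Group G]

theorem normal_of_le_center {H : Subgroup G} (h : H ≤ center G) : H.Normal :=
  ⟨fun x hx g => by rwa [mem_center_iff.1 (h hx) g, mul_inv_cancel_right]⟩

theorem map_mk'_le_center (R : Subgroup G) [R.Normal] :
    R.map (QuotientGroup.mk' ⁅(⊤ : Subgroup G), R⁆) ≤ center (G ⧸ ⁅(⊤ : Subgroup G), R⁆) := by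
  rw [← commutator_top_left_eq_bot_iff_le_center,
    ← map_top_of_surjective _ (QuotientGroup.mk'_surjective _), ← map_commutator,
    map_eq_bot_iff, QuotientGroup.ker_mk']

end Subgroup

namespace MonoidHom

variable {F G : Type*} [Group F] [Group G]

@[simps]
def twist (f : F →* G) (σ : F →* Multiplicative ℤ) {z : G} (hz : z ∈ center G) : F →* G where
  toFun w := f w * z ^ (σ w).toAdd
  map_one' := by simp
  map_mul' x y := by
    simp only [map_mul, toAdd_mul, zpow_add, mul_assoc,
      ← mul_assoc (f y), (mem_center_iff.1 (zpow_mem hz _) (f y))]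

end MonoidHom

theorem FreeGroup.conj_eq_mul_zpow {α G : Type*} [Group G] (π : FreeGroup α →* G)
    (σ : FreeGroup α →* Multiplicative ℤ) {z : G} (hz : z ∈ center G) (g : G)
    (h : ∀ x, g⁻¹ * π (of x) * g = π (of x) * z ^ (σ (of x)).toAdd) (w : FreeGroup α) :
    g⁻¹ * π w * g = π w * z ^ (σ w).toAdd := by
  have : (MulAut.conj g⁻¹).toMonoidHom.comp π = π.twist σ hz :=
    FreeGroup.ext_hom _ _ fun x => by simpa using h x
  simpa using DFunLike.congr_fun this w

def aExponentSum : FreeGroup Bool →* Multiplicative ℤ :=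
  FreeGroup.lift fun b => if b then .ofAdd 1 else 1

theorem aExponentSum_Uword (k : ℕ) (α γ : ℕ → ℤ) :
    aExponentSum (Uword k α γ) = .ofAdd (∑ i ∈ Finset.range k, α i) := by
  induction k with
  | zero => simp [Uword]
  | succ k ih =>
    simp_all [Uword, List.range_succ, Finset.sum_range_succ, aExponentSum, ← ofAdd_zsmul]

theorem map_relator_eq_one_of_mem_center {G : Type*} [Group G] (π : FreeGroup Bool →* G) (n : ℕ)
    {U : FreeGroup Bool} (hU : aExponentSum U = .ofAdd 1) (hUc : π U ∈ center G)
    (hVc : π ((FreeGroup.of true)⁻¹ * ((FreeGroup.of false) ^ n)⁻¹ *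
      FreeGroup.of true * (FreeGroup.of false) ^ n) ∈ center G) :
    π ((FreeGroup.of true)⁻¹ * ((FreeGroup.of false) ^ n)⁻¹ *
      FreeGroup.of true * (FreeGroup.of false) ^ n) = 1 := by
  set g := π (FreeGroup.of false) ^ n
  have hconj := FreeGroup.conj_eq_mul_zpow π aExponentSum hVc g
    (by rintro (_ | _) <;> simp [g, aExponentSum] <;> group) U
  rw [hU, toAdd_ofAdd, zpow_one, mul_assoc, ← mem_center_iff.1 hUc g,
    inv_mul_cancel_left] at hconj
  exact left_eq_mul.1 hconj

theorem inf_commutator_eq_of_map_le_zpowers {F A : Type*} [Group F] [CommGroup A]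
    (R : Subgroup F) [R.Normal] (σ : F →* A) {r : F} (hr : ¬IsOfFinOrder (σ r))
    (hR : R.map (QuotientGroup.mk' ⁅(⊤ : Subgroup F), R⁆) ≤
      zpowers (QuotientGroup.mk' ⁅(⊤ : Subgroup F), R⁆ r)) :
    R ⊓ commutator F = ⁅(⊤ : Subgroup F), R⁆ := by
  have hK : ⁅(⊤ : Subgroup F), R⁆ ≤ commutator F := commutator_mono le_rfl le_top
  refine le_antisymm ?_ (le_inf (commutator_le_right _ _) hK)
  rintro w ⟨hwR, hwC⟩
  obtain ⟨m, hm⟩ := mem_zpowers_iff.1 (hR ⟨w, hwR, rfl⟩)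
  have hmw : r ^ m * w⁻¹ ∈ ⁅(⊤ : Subgroup F), R⁆ := by
    rw [← QuotientGroup.eq_one_iff, QuotientGroup.mk_mul, QuotientGroup.mk_zpow,
      QuotientGroup.mk_inv]
    exact mul_inv_eq_one.2 hm
  have hσw : σ w = 1 := Abelianization.commutator_subset_ker σ hwC
  have hσ : σ r ^ m = σ r ^ (0 : ℤ) := by
    simpa [hσw] using Abelianization.commutator_subset_ker σ (hK hmw)
  obtain rfl : m = 0 := injective_zpow_iff_not_isOfFinOrder.2 hr hσ
  simpa using hmw

theorem schur_multiplier_trivial_general (n k : ℕ) (α γ : ℕ → ℤ)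
    (hα : ∑ i ∈ Finset.range k, α i = 1) :
    Subgroup.normalClosure (relsX n k α γ) ⊓ commutator (FreeGroup Bool) =
      ⁅(⊤ : Subgroup (FreeGroup Bool)), Subgroup.normalClosure (relsX n k α γ)⁆ := by
  set R := normalClosure (relsX n k α γ)
  set π := QuotientGroup.mk' ⁅(⊤ : Subgroup (FreeGroup Bool)), R⁆
  have hRc : R.map π ≤ center _ := map_mk'_le_center R
  have hσU : aExponentSum (Uword k α γ) = .ofAdd 1 := by rw [aExponentSum_Uword, hα]
  have hUc : π (Uword k α γ) ∈ center _ := hRc ⟨_, subset_normalClosure (by simp [relsX]), rfl⟩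
  have hV := map_relator_eq_one_of_mem_center π n hσU hUc
    (hRc ⟨_, subset_normalClosure (by simp [relsX]), rfl⟩)
  have := normal_of_le_center ((zpowers_le (H := center _)).2 hUc)
  refine inf_commutator_eq_of_map_le_zpowers R aExponentSum
    (by rw [hσU]; exact not_isOfFinOrder_of_isMulTorsionFree (by decide)) ?_
  rw [map_normalClosure _ _ (QuotientGroup.mk'_surjective _)]
  refine normalClosure_le_normal ?_
  rintro _ ⟨w, hw | hw, rfl⟩
  · exact hw ▸ mem_zpowers _
  · exact (Set.mem_singleton_iff.1 hw) ▸ hV ▸ one_mem _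

/-- Let `X` be the 2-complex of the presentation `⟨a, c ∣ U(a,c), [a,cⁿ]⟩` where
`U(a,c) = a^{α₁}c^{γ₁}⋯a^{α_k}c^{γ_k}` with `Σαᵢ = 1` and `Σγᵢ = 0`.  Then the Schur
multiplier `H₂(π₁(X); ℤ)` is trivial.  By Hopf's formula, for `π₁(X) = F/R` with
`F` free and `R` the normal closure of the relators, `H₂(π₁(X); ℤ) ≅ (R ∩ [F,F])/[F,R]`,
so triviality of the Schur multiplier is the statement `R ⊓ [F,F] = [F,R]`. -/
theorem schur_multiplier_trivial (n k : ℕ) (α γ : ℕ → ℤ)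
    (hα : ∑ i ∈ Finset.range k, α i = 1) (hγ : ∑ i ∈ Finset.range k, γ i = 0) :
    Subgroup.normalClosure (relsX n k α γ) ⊓ commutator (FreeGroup Bool) =
      ⁅(⊤ : Subgroup (FreeGroup Bool)), Subgroup.normalClosure (relsX n k α γ)⁆ :=
  schur_multiplier_trivial_general n k α γ hα
end

section
/- Let G = ⟨a, c | U(a,c), [a,c^n]⟩ where U has exponent sum 1 in a and 0 in c. Then the commutator subgroup G′ has the cyclic presentation G_n(w) with w(x_1,…,x_n) = x_1^{α_1} x_{1+γ_1}^{α_2} x_{1+γ_1+γ_2}^{α_3} ⋯ x_{1+γ_1+⋯+γ_{k-1}}^{α_k} (subscripts mod n), and G is isomorphic to the natural HNN extension Ĝ_n(w). -/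
/-- The word `w(x₁,…,xₙ) = x₁^{α₁} x_{1+γ₁}^{α₂} x_{1+γ₁+γ₂}^{α₃} ⋯
x_{1+γ₁+⋯+γ_{k-1}}^{α_k}` (subscripts mod `n`). -/
def wWord (n : ℕ) [NeZero n] (k : ℕ) (α γ : ℕ → ℤ) : FreeGroup (ZMod n) :=
  ((List.range k).map fun i =>
    (FreeGroup.of ((1 + ∑ j ∈ Finset.range i, γ j : ℤ) : ZMod n)) ^ (α i)).prod

/-!
Send `a ↦ x₀` and `c ↦ t` into `Ĝ_n(w) = G_n(w) ⋊ ⟨t⟩`, and back by `xᵢ ↦ cⁱ a c⁻ⁱ`, `t ↦ c`.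
Since `Σ γᵢ = 0`, the relator `U(a, c)` telescopes to `∏ (c^{Sᵢ} a c^{-Sᵢ})^{αᵢ}` with
`Sᵢ = γ₀ + ⋯ + γᵢ₋₁`, which is a cyclic shift of `w` read in the conjugates `c^m a c^{-m}`; the
relation `[a, cⁿ]` makes these conjugates depend only on `m mod n`. Hence both maps are well defined,
and they are mutually inverse on generators.

In `Ĝ_n(w)` the quotient by `G_n(w)` is `ℤ`, so the commutator subgroup lies in `G_n(w)`.
Conversely all `xᵢ` are conjugate, and the relator `w` has exponent sum `Σ αᵢ = 1` in them, so
`x₀` dies in the abelianization.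
-/

section Group

variable {Γ : Type*} [Group Γ]

theorem list_prod_zpow_mul_zpow (a c : Γ) (α γ : ℕ → ℤ) (k : ℕ) :
    ((List.range k).map fun i => a ^ α i * c ^ γ i).prod =
      ((List.range k).map fun i =>
          MulAut.conj (c ^ ∑ j ∈ Finset.range i, γ j) a ^ α i).prod *
        c ^ ∑ i ∈ Finset.range k, γ i := by
  induction k with
  | zero => simp
  | succ k ih =>
    rw [List.range_succ, List.map_append, List.map_append, List.prod_append, List.prod_append, ih,
      List.map_singleton, List.map_singleton, List.prod_singleton, List.prod_singleton,
      Finset.sum_range_succ, ← map_zpow, MulAut.conj_apply]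
    group

theorem list_prod_map_zpow (g : Γ) (α : ℕ → ℤ) (k : ℕ) :
    ((List.range k).map fun i => g ^ α i).prod = g ^ ∑ i ∈ Finset.range k, α i := by
  induction k with
  | zero => simp
  | succ k ih =>
    rw [List.range_succ, List.map_append, List.prod_append, ih, Finset.sum_range_succ,
      zpow_add, List.map_singleton, List.prod_singleton]

theorem mem_commutator_of_list_prod_conj_zpow_eq_one {y : Γ} {g : ℕ → Γ} {α : ℕ → ℤ} {k : ℕ}
    (hα : ∑ i ∈ Finset.range k, α i = 1)
    (h : ((List.range k).map fun i => MulAut.conj (g i) y ^ α i).prod = 1) :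
    y ∈ commutator Γ := by
  have hconj (i : ℕ) :
      Abelianization.of (MulAut.conj (g i) y ^ α i) = Abelianization.of y ^ α i := by
    rw [map_zpow, MulAut.conj_apply, map_mul, map_mul, map_inv, mul_inv_cancel_comm]
  have := congrArg Abelianization.of h
  simp only [map_list_prod, List.map_map, Function.comp_def, hconj, map_one] at this
  rw [list_prod_map_zpow, hα, zpow_one] at this
  rwa [← Abelianization.ker_of, MonoidHom.mem_ker]

theorem conj_zpow_val_intCast {n : ℕ} [NeZero n] {a c : Γ} (h : Commute a (c ^ n)) (m : ℤ) :
    MulAut.conj (c ^ ((m : ZMod n).val : ℤ)) a = MulAut.conj (c ^ m) a := by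
  have hfix : MulAut.conj (c ^ ((n : ℤ) * (m / n))) a = a := by
    rw [zpow_mul, zpow_natCast, MulAut.conj_apply, ((h.zpow_right _).symm).mul_inv_cancel]
  conv_rhs => rw [← Int.emod_add_mul_ediv m n, zpow_add, map_mul, MulAut.mul_apply, hfix]
  rw [ZMod.val_intCast]

theorem MonoidHom.map_mulAutConj {Δ : Type*} [Group Δ] (f : Γ →* Δ) (g x : Γ) :
    f (MulAut.conj g x) = MulAut.conj (f g) (f x) := by
  simp only [MulAut.conj_apply, map_mul, map_inv]

end Group

theorem PresentedGroup.lift_of_eq_one_of_mem {α : Type*} {rels : Set (FreeGroup α)}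
    {r : FreeGroup α} (hr : r ∈ rels) :
    FreeGroup.lift (PresentedGroup.of (rels := rels)) r = 1 := by
  rw [← FreeGroup.lift_unique (f := PresentedGroup.of) (PresentedGroup.mk rels) fun _ => rfl]
  exact PresentedGroup.one_of_mem hr

namespace CyclicPresentation

open SemidirectProduct

section Presentations

variable {Γ : Type*} [Group Γ] {n : ℕ}

theorem lift_eq_one_of_mem_relsX_iff (f : Bool → Γ) (k : ℕ) (α γ : ℕ → ℤ) :
    (∀ r ∈ relsX n k α γ, FreeGroup.lift f r = 1) ↔
      ((List.range k).map fun i => f true ^ α i * f false ^ γ i).prod = 1 ∧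
        Commute (f true) (f false ^ n) := by
  simp only [relsX, Set.mem_insert_iff, Set.mem_singleton_iff, forall_eq_or_imp, forall_eq,
    Uword, map_list_prod, List.map_map, Function.comp_def, map_mul, map_zpow, map_inv, map_pow,
    FreeGroup.lift_apply_of]
  rw [← Commute.inv_inv_iff, ← commutatorElement_eq_one_iff_commute, commutatorElement_def,
    inv_inv, inv_inv]

variable [NeZero n]

theorem shiftEnd_pow_apply_of (m : ℕ) (i : ZMod n) :
    (shiftEnd n ^ m) (FreeGroup.of i) = FreeGroup.of (i + m) := by
  induction m with
  | zero => simp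
  | succ m ih =>
    rw [pow_succ', Monoid.End.coe_mul, Function.comp_apply, ih, Nat.cast_succ, ← add_assoc]
    exact FreeGroup.lift_apply_of

theorem lift_shiftEnd_pow_apply (f : ZMod n → Γ) (m : ℕ) (v : FreeGroup (ZMod n)) :
    FreeGroup.lift f ((shiftEnd n ^ m) v) = FreeGroup.lift (fun i => f (i + m)) v :=
  FreeGroup.lift_unique ((FreeGroup.lift f).comp (shiftEnd n ^ m : FreeGroup (ZMod n) →* _))
    fun i => by
      change FreeGroup.lift f ((shiftEnd n ^ m) (FreeGroup.of i)) = _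
      rw [shiftEnd_pow_apply_of, FreeGroup.lift_apply_of]

theorem lift_eq_one_of_mem_cycRels_iff (f : ZMod n → Γ) (k : ℕ) (α γ : ℕ → ℤ) :
    (∀ r ∈ cycRels n (wWord n k α γ), FreeGroup.lift f r = 1) ↔
      ∀ j : ZMod n, ((List.range k).map fun i =>
        f (((1 + ∑ l ∈ Finset.range i, γ l : ℤ) : ZMod n) + j) ^ α i).prod = 1 := by
  simp only [cycRels, Set.forall_mem_range, lift_shiftEnd_pow_apply, wWord, map_list_prod,
    List.map_map, Function.comp_def, map_zpow, FreeGroup.lift_apply_of, ZMod.natCast_val,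
    ZMod.cast_id', id]

end Presentations

section CyclicallyPresentedGroup

variable {n : ℕ} [NeZero n] {k : ℕ} {α γ : ℕ → ℤ}

theorem Gn.list_prod_of_zpow_eq_one (j : ZMod n) :
    ((List.range k).map fun i => (PresentedGroup.of
      (((1 + ∑ l ∈ Finset.range i, γ l : ℤ) : ZMod n) + j) : Gn n (wWord n k α γ)) ^ α i).prod = 1 :=
  (lift_eq_one_of_mem_cycRels_iff _ k α γ).1 (fun _ ↦ PresentedGroup.lift_of_eq_one_of_mem) j

noncomputable def Gn.shift (m : ZMod n) : Gn n (wWord n k α γ) →* Gn n (wWord n k α γ) :=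
  PresentedGroup.toGroup (f := fun i ↦ PresentedGroup.of (i + m)) <|
    (lift_eq_one_of_mem_cycRels_iff _ k α γ).2 fun j ↦ by
      simpa only [add_assoc] using Gn.list_prod_of_zpow_eq_one (k := k) (α := α) (γ := γ) (j + m)

theorem Gn.shift_of (m i : ZMod n) :
    Gn.shift (k := k) (α := α) (γ := γ) m (PresentedGroup.of i) = PresentedGroup.of (i + m) :=
  PresentedGroup.toGroup.of _

noncomputable def Gn.shiftAut : MulAut (Gn n (wWord n k α γ)) :=
  MonoidHom.toMulEquiv (Gn.shift 1) (Gn.shift (-1))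
    (PresentedGroup.ext fun i ↦ by simp [Gn.shift_of])
    (PresentedGroup.ext fun i ↦ by simp [Gn.shift_of])

theorem Gn.shiftAut_apply_of (i : ZMod n) :
    Gn.shiftAut (k := k) (α := α) (γ := γ) (PresentedGroup.of i) = PresentedGroup.of (i + 1) :=
  Gn.shift_of 1 i

theorem Gn.shiftAut_zpow_apply_of (z : ℤ) (i : ZMod n) :
    (Gn.shiftAut (k := k) (α := α) (γ := γ) ^ z) (PresentedGroup.of i) =
      PresentedGroup.of (i + z) := by
  induction z using Int.induction_on generalizing i with
  | zero => simp
  | succ z ih =>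
    rw [zpow_add_one, MulAut.mul_apply, Gn.shiftAut_apply_of, ih]
    congr 1
    push_cast
    ring
  | pred z ih =>
    rw [zpow_sub_one, MulAut.mul_apply]
    change (Gn.shiftAut ^ (-(z : ℤ))) (Gn.shift (-1) (PresentedGroup.of i)) = _
    rw [Gn.shift_of, ih]
    congr 1
    push_cast
    ring

end CyclicallyPresentedGroup

section HNNExtension

variable {n : ℕ} [NeZero n] {k : ℕ} {α γ : ℕ → ℤ}

abbrev Ghat (n : ℕ) [NeZero n] (k : ℕ) (α γ : ℕ → ℤ) :=
  Gn n (wWord n k α γ) ⋊[zpowersHom (MulAut (Gn n (wWord n k α γ))) Gn.shiftAut] Multiplicative ℤ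

noncomputable def Ghat.t : Ghat n k α γ := inr (Multiplicative.ofAdd 1)

theorem Ghat.conj_t_zpow_inl_of (z : ℤ) (i : ZMod n) :
    MulAut.conj (Ghat.t ^ z) (inl (PresentedGroup.of i)) =
      (inl (PresentedGroup.of (i + z)) : Ghat n k α γ) := by
  rw [MulAut.conj_apply, Ghat.t, ← map_zpow, ← map_inv, ← inl_aut, zpowersHom_apply]
  simp [Gn.shiftAut_zpow_apply_of]

theorem Ghat.list_prod_conj_t_zpow_eq_one :
    ((List.range k).map fun i ↦ MulAut.conj (Ghat.t ^ ∑ j ∈ Finset.range i, γ j)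
      (inl (PresentedGroup.of 0) : Ghat n k α γ) ^ α i).prod = 1 := by
  have h := congrArg (inl : _ →* Ghat n k α γ)
    (Gn.list_prod_of_zpow_eq_one (n := n) (k := k) (α := α) (γ := γ) (-1))
  have hidx (s : ℤ) : ((1 + s : ℤ) : ZMod n) + -1 = 0 + (s : ZMod n) := by push_cast; ring
  simp only [map_list_prod, List.map_map, Function.comp_def, map_zpow, map_one, hidx] at h
  simpa only [Ghat.conj_t_zpow_inl_of] using h

theorem Ghat.commute_inl_of_zero_t_pow :
    Commute (inl (PresentedGroup.of 0) : Ghat n k α γ) (Ghat.t ^ n) := by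
  have h : MulAut.conj (Ghat.t ^ (n : ℤ)) (inl (PresentedGroup.of 0) : Ghat n k α γ) =
      inl (PresentedGroup.of 0) := by
    rw [Ghat.conj_t_zpow_inl_of, Int.cast_natCast, ZMod.natCast_self, add_zero]
  rw [MulAut.conj_apply, zpow_natCast, mul_inv_eq_iff_eq_mul] at h
  exact h.symm

theorem Ghat.commutator_eq_range_inl (hα : ∑ i ∈ Finset.range k, α i = 1) :
    commutator (Ghat n k α γ) = (inl : Gn n (wWord n k α γ) →* Ghat n k α γ).range := by
  refine le_antisymm ?_ ?_
  · rw [range_inl_eq_ker_rightHom]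
    exact Abelianization.commutator_subset_ker _
  · rw [MonoidHom.range_eq_map, ← PresentedGroup.closure_range_of, MonoidHom.map_closure,
      Subgroup.closure_le]
    rintro _ ⟨_, ⟨i, rfl⟩, rfl⟩
    have h0 : (inl (PresentedGroup.of 0) : Ghat n k α γ) ∈ commutator (Ghat n k α γ) :=
      mem_commutator_of_list_prod_conj_zpow_eq_one hα Ghat.list_prod_conj_t_zpow_eq_one
    have := (inferInstance : (commutator (Ghat n k α γ)).Normal).conj_mem _ h0
      (Ghat.t ^ (i.val : ℤ))
    rwa [← MulAut.conj_apply, Ghat.conj_t_zpow_inl_of, Int.cast_natCast, ZMod.natCast_zmod_val,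
      zero_add] at this

end HNNExtension

section TwoGeneratorGroup

variable {n k : ℕ} {α γ : ℕ → ℤ}

abbrev G (n k : ℕ) (α γ : ℕ → ℤ) := PresentedGroup (relsX n k α γ)

noncomputable def G.a : G n k α γ := PresentedGroup.of true

noncomputable def G.c : G n k α γ := PresentedGroup.of false

theorem G.relations :
    ((List.range k).map fun i ↦ (G.a : G n k α γ) ^ α i * G.c ^ γ i).prod = 1 ∧
      Commute (G.a : G n k α γ) (G.c ^ n) :=
  (lift_eq_one_of_mem_relsX_iff _ k α γ).1 fun _ ↦ PresentedGroup.lift_of_eq_one_of_mem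

theorem G.list_prod_conj_c_zpow_eq_one (hγ : ∑ i ∈ Finset.range k, γ i = 0) :
    ((List.range k).map fun i ↦
      MulAut.conj ((G.c : G n k α γ) ^ ∑ j ∈ Finset.range i, γ j) G.a ^ α i).prod = 1 := by
  have h := list_prod_zpow_mul_zpow (G.a : G n k α γ) G.c α γ k
  rwa [G.relations.1, hγ, zpow_zero, mul_one, eq_comm] at h

end TwoGeneratorGroup

section Isomorphism

variable {n : ℕ} [NeZero n] {k : ℕ} {α γ : ℕ → ℤ}

theorem G.list_prod_conj_c_zpow_val_eq_one (hγ : ∑ i ∈ Finset.range k, γ i = 0) (j : ZMod n) :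
    ((List.range k).map fun i ↦ MulAut.conj ((G.c : G n k α γ) ^
      ((((1 + ∑ l ∈ Finset.range i, γ l : ℤ) : ZMod n) + j).val : ℤ)) G.a ^ α i).prod = 1 := by
  have hx (i : ℕ) : MulAut.conj (G.c ^ ((((1 + ∑ l ∈ Finset.range i, γ l : ℤ) : ZMod n)
        + j).val : ℤ)) (G.a : G n k α γ) ^ α i =
      MulAut.conj (G.c ^ ((j.val : ℤ) + 1))
        (MulAut.conj (G.c ^ ∑ l ∈ Finset.range i, γ l) G.a ^ α i) := by
    have hcast : ((1 + ∑ l ∈ Finset.range i, γ l : ℤ) : ZMod n) + j =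
        (((j.val : ℤ) + 1 + ∑ l ∈ Finset.range i, γ l : ℤ) : ZMod n) := by
      push_cast [ZMod.natCast_zmod_val]
      ring
    rw [hcast, conj_zpow_val_intCast G.relations.2, zpow_add, map_mul, MulAut.mul_apply]
    exact (map_zpow (MulAut.conj _) _ _).symm
  calc _ = MulAut.conj (G.c ^ ((j.val : ℤ) + 1)) ((List.range k).map fun i ↦
          MulAut.conj (G.c ^ ∑ l ∈ Finset.range i, γ l) (G.a : G n k α γ) ^ α i).prod := by
        rw [map_list_prod, List.map_map]
        exact congrArg _ (List.map_congr_left fun i _ ↦ hx i)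
    _ = 1 := by rw [G.list_prod_conj_c_zpow_eq_one hγ, map_one]

noncomputable def Gn.toG (hγ : ∑ i ∈ Finset.range k, γ i = 0) :
    Gn n (wWord n k α γ) →* G n k α γ :=
  PresentedGroup.toGroup <|
    (lift_eq_one_of_mem_cycRels_iff (fun i ↦ MulAut.conj (G.c ^ (i.val : ℤ)) G.a) k α γ).2
      (G.list_prod_conj_c_zpow_val_eq_one hγ)

theorem Gn.toG_of (hγ : ∑ i ∈ Finset.range k, γ i = 0) (i : ZMod n) :
    (Gn.toG hγ : Gn n (wWord n k α γ) →* G n k α γ) (PresentedGroup.of i) =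
      MulAut.conj (G.c ^ (i.val : ℤ)) G.a :=
  PresentedGroup.toGroup.of _

noncomputable def Ghat.toG (hγ : ∑ i ∈ Finset.range k, γ i = 0) : Ghat n k α γ →* G n k α γ :=
  SemidirectProduct.lift (Gn.toG hγ) (zpowersHom _ G.c) fun z ↦ PresentedGroup.ext fun i ↦ by
    have hcast : i + ((Multiplicative.toAdd z : ℤ) : ZMod n) =
        (((i.val : ℤ) + Multiplicative.toAdd z : ℤ) : ZMod n) := by
      push_cast [ZMod.natCast_zmod_val]
      rfl
    simp only [MonoidHom.comp_apply, MulEquiv.coe_toMonoidHom, zpowersHom_apply,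
      Gn.shiftAut_zpow_apply_of, Gn.toG_of]
    rw [hcast, conj_zpow_val_intCast G.relations.2, ← MulAut.mul_apply, ← map_mul, ← zpow_add,
      add_comm]

noncomputable def G.toGhat (hγ : ∑ i ∈ Finset.range k, γ i = 0) : G n k α γ →* Ghat n k α γ :=
  PresentedGroup.toGroup (f := fun b ↦ cond b (inl (PresentedGroup.of 0)) Ghat.t) <|
    (lift_eq_one_of_mem_relsX_iff _ k α γ).2
      ⟨by simpa only [list_prod_zpow_mul_zpow, hγ, zpow_zero, mul_one, cond_true, cond_false]
          using Ghat.list_prod_conj_t_zpow_eq_one,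
        Ghat.commute_inl_of_zero_t_pow⟩

theorem G.toGhat_a (hγ : ∑ i ∈ Finset.range k, γ i = 0) :
    G.toGhat hγ G.a = (inl (PresentedGroup.of 0) : Ghat n k α γ) :=
  PresentedGroup.toGroup.of _

theorem G.toGhat_c (hγ : ∑ i ∈ Finset.range k, γ i = 0) :
    G.toGhat hγ G.c = (Ghat.t : Ghat n k α γ) :=
  PresentedGroup.toGroup.of _

theorem Ghat.toG_inl_of (hγ : ∑ i ∈ Finset.range k, γ i = 0) (i : ZMod n) :
    Ghat.toG hγ (inl (PresentedGroup.of i)) =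
      MulAut.conj ((G.c : G n k α γ) ^ (i.val : ℤ)) G.a := by
  rw [Ghat.toG, lift_inl, Gn.toG_of]

theorem Ghat.toG_t (hγ : ∑ i ∈ Finset.range k, γ i = 0) :
    Ghat.toG hγ Ghat.t = (G.c : G n k α γ) := by
  rw [Ghat.toG, Ghat.t, lift_inr, zpowersHom_apply, toAdd_ofAdd, zpow_one]

noncomputable def G.equivGhat (hγ : ∑ i ∈ Finset.range k, γ i = 0) :
    G n k α γ ≃* Ghat n k α γ :=
  MonoidHom.toMulEquiv (G.toGhat hγ) (Ghat.toG hγ)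
    (PresentedGroup.ext fun b ↦ by
      cases b
      · change Ghat.toG hγ (G.toGhat hγ G.c) = G.c
        rw [G.toGhat_c, Ghat.toG_t]
      · change Ghat.toG hγ (G.toGhat hγ G.a) = G.a
        rw [G.toGhat_a, Ghat.toG_inl_of, ZMod.val_zero, Nat.cast_zero, zpow_zero, map_one,
          MulAut.one_apply])
    (SemidirectProduct.hom_ext
      (PresentedGroup.ext fun i ↦ by
        rw [MonoidHom.comp_apply, MonoidHom.comp_apply, Ghat.toG_inl_of, MonoidHom.map_mulAutConj,
          map_zpow, G.toGhat_a, G.toGhat_c, Ghat.conj_t_zpow_inl_of, Int.cast_natCast,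
          ZMod.natCast_zmod_val, zero_add]
        rfl)
      (MonoidHom.ext_mint <| by
        rw [MonoidHom.comp_apply, MonoidHom.comp_apply, ← Ghat.t, Ghat.toG_t, G.toGhat_c]
        rfl))

end Isomorphism

end CyclicPresentation

/-- Let `G = ⟨a, c ∣ U(a,c), [a,cⁿ]⟩` where `U` has exponent sum `1` in `a` and `0` in
`c`.  Then the commutator subgroup `G′` has the cyclic presentation `G_n(w)` with
`w = x₁^{α₁} x_{1+γ₁}^{α₂} ⋯ x_{1+γ₁+⋯+γ_{k-1}}^{α_k}` (subscripts mod `n`), and `G` is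
isomorphic to the natural HNN extension `Ĝ_n(w) = G_n(w) ⋊_φ ℤ` (`φ` the shift
automorphism). -/
theorem commutator_subgroup_cyclically_presented (n : ℕ) [NeZero n] (k : ℕ)
    (α γ : ℕ → ℤ)
    (hα : ∑ i ∈ Finset.range k, α i = 1) (hγ : ∑ i ∈ Finset.range k, γ i = 0) :
    Nonempty (↥(commutator (PresentedGroup (relsX n k α γ))) ≃* Gn n (wWord n k α γ)) ∧
      ∃ φ : MulAut (Gn n (wWord n k α γ)),
        (∀ i : ZMod n, φ (PresentedGroup.of i) = PresentedGroup.of (i + 1)) ∧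
        Nonempty (PresentedGroup (relsX n k α γ) ≃*
          (Gn n (wWord n k α γ) ⋊[zpowersHom (MulAut (Gn n (wWord n k α γ))) φ]
            Multiplicative ℤ)) := by
  open CyclicPresentation SemidirectProduct in
  let e : G n k α γ ≃* Ghat n k α γ := G.equivGhat hγ
  have he : (commutator (G n k α γ)).map (e : G n k α γ →* Ghat n k α γ) =
      (inl : _ →* Ghat n k α γ).range := by
    rw [map_commutator_eq, MulEquiv.range_eq_top e, ← commutator_def,
      Ghat.commutator_eq_range_inl hα]
  exact ⟨⟨(e.subgroupMap _).trans <|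
      (MulEquiv.subgroupCongr he).trans (MonoidHom.ofInjective inl_injective).symm⟩,
    Gn.shiftAut, Gn.shiftAut_apply_of, ⟨e⟩⟩
end
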